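/- arXiv:math/0102105 — 7 statements merged into one kernel-verified Lean document; each statement's English description precedes it below -/
import Mathlib

section
/- The generating function for partitions fitting in an a × b box is the Gaussian binomial coefficient: Σ_{λ ⊆ a×b box} q^{|λ|} = qbinom(a+b, a), where qbinom denotes the q-binomial coefficient. -/
/-!
Both sides satisfy the q-Pascal recurrence
`F(a+1, b+1) = F(a+1, b) + q^(b+1) F(a, b+1)` with value `1` when `a = 0` or `b = 0`.
For the rational function this is the identity
`(q^(b+1) - 1) + q^(b+1) (q^(a+1) - 1) = q^(a+b+2) - 1`.
For partitions in an `(a+1) × (b+1)` box, either the largest part is `b+1`, and removing it leaves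
a partition in an `a × (b+1)` box, or all parts are at most `b`.
-/

open Finset

/-- The Gaussian binomial coefficient `qbinom(a+b, a) = Π_{i=1}^{a} (q^{b+i}-1)/(q^i-1)`,
as a rational function in `q`. -/
noncomputable def qbinom (a b : ℕ) : RatFunc ℚ :=
  ∏ i ∈ Finset.Icc 1 a, (RatFunc.X ^ (b + i) - 1) / (RatFunc.X ^ i - 1)

theorem RatFunc.X_pow_sub_one_ne_zero {K : Type*} [Field K] {n : ℕ} (hn : n ≠ 0) :
    (X ^ n - 1 : RatFunc K) ≠ 0 := by
  simpa using algebraMap_ne_zero (Polynomial.X_pow_sub_C_ne_zero (Nat.pos_of_ne_zero hn) (1 : K))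

section QBinom

open RatFunc (X)

theorem qbinom_eq_prod_div_prod (a b : ℕ) :
    qbinom a b = (∏ i ∈ range a, (X ^ (b + 1 + i) - 1)) / ∏ i ∈ range a, (X ^ (1 + i) - 1) := by
  rw [qbinom, ← Ico_add_one_right_eq_Icc, prod_Ico_eq_prod_range, prod_div_distrib,
    Nat.add_sub_cancel]
  simp only [add_assoc]

theorem qbinom_zero_left (b : ℕ) : qbinom 0 b = 1 := by
  simp [qbinom]

theorem qbinom_zero_right (a : ℕ) : qbinom a 0 = 1 :=
  prod_eq_one fun i hi => by
    rw [zero_add, div_self (RatFunc.X_pow_sub_one_ne_zero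
      (Nat.one_le_iff_ne_zero.mp (mem_Icc.mp hi).1))]

theorem qbinom_succ_succ (a b : ℕ) :
    qbinom (a + 1) (b + 1) = qbinom (a + 1) b + X ^ (b + 1) * qbinom a (b + 1) := by
  have prod_range_succ_shift (c : ℕ) : ∏ i ∈ range (a + 1), (X ^ (c + i) - 1 : RatFunc ℚ) =
      (∏ i ∈ range a, (X ^ (c + 1 + i) - 1)) * (X ^ c - 1) := by
    rw [prod_range_succ']
    simp only [add_assoc, add_comm 1, add_zero]
  have hden : ∏ i ∈ range a, (X ^ (1 + i) - 1 : RatFunc ℚ) ≠ 0 :=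
    prod_ne_zero_iff.mpr fun i _ => RatFunc.X_pow_sub_one_ne_zero (by omega)
  have hlast : (X ^ (1 + a) - 1 : RatFunc ℚ) ≠ 0 := RatFunc.X_pow_sub_one_ne_zero (by omega)
  rw [qbinom_eq_prod_div_prod, qbinom_eq_prod_div_prod, qbinom_eq_prod_div_prod,
    prod_range_succ, prod_range_succ, prod_range_succ_shift]
  field_simp
  ring

end QBinom

theorem Fin.antitone_cons {α : Type*} [Preorder α] {n : ℕ} {x : α} {g : Fin n → α}
    (hg : Antitone g) (hx : ∀ i, g i ≤ x) : Antitone (Fin.cons x g : Fin (n + 1) → α) := by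
  intro i j hij
  cases j using Fin.cases with
  | zero => rw [Fin.le_zero_iff.mp hij]
  | succ j =>
    cases i using Fin.cases with
    | zero => exact hx j
    | succ i => exact hg (Fin.succ_le_succ_iff.mp hij)

def antitoneHeadEqLastEquiv (a m : ℕ) :
    {f : {f : Fin (a + 1) → Fin (m + 1) // Antitone f} // f.1 0 = Fin.last m} ≃
      {g : Fin a → Fin (m + 1) // Antitone g} where
  toFun f := ⟨Fin.tail f.1.1, f.1.2.comp_monotone Fin.strictMono_succ.monotone⟩
  invFun g := ⟨⟨Fin.cons (Fin.last m) g.1, Fin.antitone_cons g.2 fun _ => Fin.le_last _⟩, rfl⟩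
  left_inv f := by
    obtain ⟨⟨f, hf⟩, h0⟩ := f
    ext1; ext1
    simp only [← h0, Fin.cons_self_tail]
  right_inv g := rfl

def antitoneHeadNeLastEquiv (a m : ℕ) :
    {f : {f : Fin (a + 1) → Fin (m + 2) // Antitone f} // f.1 0 ≠ Fin.last (m + 1)} ≃
      {g : Fin (a + 1) → Fin (m + 1) // Antitone g} where
  toFun f := ⟨fun i => (f.1.1 i).castPred (Fin.ne_last_of_lt <|
      (f.1.2 (Fin.zero_le i)).trans_lt (Fin.lt_last_iff_ne_last.mpr f.2)),
    fun _ _ hij => Fin.castPred_le_castPred_iff.mpr (f.1.2 hij)⟩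
  invFun g := ⟨⟨Fin.castSucc ∘ g.1, Fin.strictMono_castSucc.monotone.comp_antitone g.2⟩,
    (Fin.castSucc_lt_last _).ne⟩
  left_inv f := by ext1; ext1; ext1 i; simp
  right_inv g := by ext1; ext1 i; simp

section BoxGenFun

variable {R : Type*} [CommSemiring R] (q : R)

def boxGenFun (a b : ℕ) : R :=
  ∑ f : {f : Fin a → Fin (b + 1) // Antitone f}, q ^ ∑ i, (f.1 i : ℕ)

theorem boxGenFun_zero_left (b : ℕ) : boxGenFun q 0 b = 1 := by
  rw [boxGenFun, Fintype.sum_subsingleton _ ⟨fun _ => 0, antitone_const⟩]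
  simp

theorem boxGenFun_zero_right (a : ℕ) : boxGenFun q a 0 = 1 := by
  have : Subsingleton (Fin a → Fin (0 + 1)) := inferInstanceAs (Subsingleton (Fin a → Fin 1))
  rw [boxGenFun, Fintype.sum_subsingleton _ ⟨fun _ => 0, antitone_const⟩]
  simp

theorem boxGenFun_succ_succ (a b : ℕ) :
    boxGenFun q (a + 1) (b + 1) = boxGenFun q (a + 1) b + q ^ (b + 1) * boxGenFun q a (b + 1) := by
  rw [boxGenFun, ← Fintype.sum_subtype_add_sum_subtype (fun f => f.1 0 = Fin.last (b + 1)),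
    add_comm, boxGenFun, boxGenFun, mul_sum]
  congr 1
  · refine Fintype.sum_equiv (antitoneHeadNeLastEquiv a b) _ _ fun f => ?_
    simp [antitoneHeadNeLastEquiv]
  · refine Fintype.sum_equiv (antitoneHeadEqLastEquiv a (b + 1)) _ _ fun f => ?_
    rw [Fin.sum_univ_succ, f.2, Fin.val_last, pow_add]
    rfl

end BoxGenFun

/-- The generating function of partitions fitting in an `a × b` box (encoded as antitone
functions `Fin a → Fin (b+1)`) is the Gaussian binomial coefficient `qbinom(a+b,a)`. -/
theorem gaussian_binomial_generating_function (a b : ℕ) :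
    ∑ f : {f : Fin a → Fin (b + 1) // Antitone f}, RatFunc.X ^ (∑ i, ((f : Fin a → Fin (b+1)) i : ℕ)) =
      qbinom a b := by
  change boxGenFun RatFunc.X a b = qbinom a b
  induction a generalizing b with
  | zero => rw [boxGenFun_zero_left, qbinom_zero_left]
  | succ a iha =>
    induction b with
    | zero => rw [boxGenFun_zero_right, qbinom_zero_right]
    | succ b ihb => rw [boxGenFun_succ_succ, ihb, iha, qbinom_succ_succ]
end

section
/- The number of aperiodic necklaces of size i on the symbols {0,1,...,k-1} with total symbol sum equal to m is (1/i) · Σ_{d | i} μ(d) · f(m,k,i,d), where f(m,k,i,d) is the coefficient of z^m in ((z^{kd}-1)/(z^d-1))^{i/d}. -/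
open Finset

/-- Cyclic rotation of a word of length `i` by `r`. -/
def rotWord (i k : ℕ) [NeZero i] (r : Fin i) (w : Fin i → Fin k) : Fin i → Fin k :=
  fun j => w (j + r)

/-- A word is aperiodic (primitive) if no nontrivial cyclic rotation fixes it. -/
def AperiodicWord (i k : ℕ) [NeZero i] (w : Fin i → Fin k) : Prop :=
  ∀ r : Fin i, rotWord i k r w = w → r = 0

/-- `f(m,k,i,d)`: the coefficient of `z^m` in `((z^{kd}-1)/(z^d-1))^{i/d}
    = (1 + z^d + ⋯ + z^{(k-1)d})^{i/d}`. -/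
noncomputable def necklaceCoeff (m k i d : ℕ) : ℚ :=
  Polynomial.coeff ((∑ j ∈ Finset.range k, (Polynomial.X : Polynomial ℚ) ^ (d * j)) ^ (i / d)) m

/-!
Rotation is an action of `Fin i` on words, and a word is aperiodic exactly when its stabilizer is
trivial, so every class of aperiodic words has `i` elements. A word fixed by rotation by `e ∣ i`
is a word of length `e` repeated `i / e` times, which is why words fixed by rotation by `i / d`
with symbol sum `m` are counted by `f(m,k,i,d)`. Möbius inversion over the minimal period of the
rotation by one step then isolates the words of minimal period `i`, the aperiodic ones.
-/

open Function Fin.NatCast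

theorem AddAction.card_subtype_eq_card_quot_mul_card {G α : Type*} [AddGroup G] [AddAction G α]
    (p : α → Prop) (hp : ∀ (g : G) x, p x → p (g +ᵥ x))
    (hfree : ∀ (g : G) x, p x → g +ᵥ x = x → g = 0) :
    Nat.card {x // p x} =
      Nat.card (Quot fun x y : {x // p x} => ∃ g : G, g +ᵥ x.1 = y.1) * Nat.card G := by
  let S : SubAddAction G α := ⟨{x | p x}, fun g x hx => hp g x hx⟩
  have hstab : ∀ x : S, AddAction.stabilizer G x = ⊥ := fun x =>
    (AddSubgroup.eq_bot_iff_forall _).2 fun g hg =>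
      hfree g x.1 x.2 (congrArg Subtype.val (AddAction.mem_stabilizer_iff.1 hg))
  have horbit : Quotient (AddAction.orbitRel G S) ≃
      Quot fun x y : {x // p x} => ∃ g : G, g +ᵥ x.1 = y.1 :=
    Quot.congrRight fun x y => by
      rw [← Setoid.comm']
      exact AddAction.orbitRel_apply.trans (by simp [AddAction.mem_orbit_iff, Subtype.ext_iff])
  exact (Nat.card_congr ((AddAction.selfEquivOrbitsQuotientProd hstab).trans
    (horbit.prodCongr (Equiv.refl G)))).trans (Nat.card_prod _ _)

theorem Finset.card_filter_isPeriodicPt {α : Type*} [DecidableEq α] (f : α → α)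
    (s : Finset α) {n : ℕ} (hn : n ≠ 0) :
    #{x ∈ s | IsPeriodicPt f n x} = ∑ d ∈ n.divisors, #{x ∈ s | minimalPeriod f x = d} := by
  rw [card_eq_sum_card_fiberwise (f := fun x => minimalPeriod f x) (t := n.divisors)]
  · refine sum_congr rfl fun d hd => congrArg card ?_
    ext x
    simp only [mem_filter, and_assoc, and_congr_right_iff]
    refine fun _ => and_iff_right_of_imp fun hx => ?_
    rw [isPeriodicPt_iff_minimalPeriod_dvd, hx]
    exact Nat.dvd_of_mem_divisors hd
  · intro x hx
    exact Nat.mem_divisors.2 ⟨isPeriodicPt_iff_minimalPeriod_dvd.1 (mem_filter.1 hx).2, hn⟩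

theorem Finset.card_filter_minimalPeriod_eq {α R : Type*} [NonAssocRing R] [DecidableEq α]
    (f : α → α) (s : Finset α) {n : ℕ} (hn : 0 < n) :
    (#{x ∈ s | minimalPeriod f x = n} : R) =
      ∑ d ∈ n.divisors,
        (ArithmeticFunction.moebius d : R) * #{x ∈ s | IsPeriodicPt f (n / d) x} := by
  rw [← Nat.sum_divisorsAntidiagonal fun d e =>
    (ArithmeticFunction.moebius d : R) * #{x ∈ s | IsPeriodicPt f e x}]
  refine ((ArithmeticFunction.sum_eq_iff_sum_mul_moebius_eq
    (f := fun d => (#{x ∈ s | minimalPeriod f x = d} : R))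
    (g := fun n => (#{x ∈ s | IsPeriodicPt f n x} : R))).1
    (fun n hn => ?_) n hn).symm
  rw [card_filter_isPeriodicPt f s hn.ne', Nat.cast_sum]

theorem Fin.modNat_finProdFinEquiv {c e : ℕ} (x : Fin c) (y : Fin e) :
    (finProdFinEquiv (x, y)).modNat = y :=
  congrArg Prod.snd (finProdFinEquiv.symm_apply_apply (x, y))

theorem Fin.modNat_surjective {c e : ℕ} (hc : c ≠ 0) :
    Surjective (Fin.modNat : Fin (c * e) → Fin e) := fun y =>
  ⟨finProdFinEquiv (⟨0, Nat.pos_of_ne_zero hc⟩, y), Fin.modNat_finProdFinEquiv _ y⟩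

theorem Fin.sum_comp_modNat {M : Type*} [AddCommMonoid M] {c e : ℕ} (g : Fin e → M) :
    ∑ j : Fin (c * e), g j.modNat = c • ∑ b, g b := by
  rw [← finProdFinEquiv.sum_comp, Fintype.sum_prod_type]
  simp only [Fin.modNat_finProdFinEquiv, sum_const]

open Polynomial in
theorem Polynomial.coeff_sum_range_X_pow_mul_pow {R : Type*} [CommSemiring R] (k d e m : ℕ) :
    ((∑ j ∈ range k, (X : R[X]) ^ (d * j)) ^ e).coeff m =
      #{v : Fin e → Fin k | d * ∑ t, (v t : ℕ) = m} := by
  rw [← Fin.sum_univ_eq_sum_range (fun j => (X : R[X]) ^ (d * j)), Fintype.sum_pow,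
    finsetSum_coeff]
  simp_rw [prod_pow_eq_pow_sum, ← mul_sum, coeff_X_pow]
  rw [sum_boole]
  simp [eq_comm]

abbrev rotWordAddAction (i k : ℕ) [NeZero i] : AddAction (Fin i) (Fin i → Fin k) where
  vadd := rotWord i k
  zero_vadd w := funext fun j => congrArg w (add_zero j)
  add_vadd r s w := funext fun j => congrArg w (add_assoc j r s).symm

attribute [local instance] rotWordAddAction

section Rotation

variable {i k : ℕ} [NeZero i]

theorem isPeriodicPt_one_vadd_iff {n : ℕ} {w : Fin i → Fin k} :
    IsPeriodicPt ((1 : Fin i) +ᵥ ·) n w ↔ rotWord i k n w = w := by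
  rw [AddAction.isPeriodicPt_vadd_iff, nsmul_one]
  rfl

theorem minimalPeriod_one_vadd_dvd (w : Fin i → Fin k) :
    minimalPeriod ((1 : Fin i) +ᵥ ·) w ∣ i := by
  rw [← isPeriodicPt_iff_minimalPeriod_dvd, isPeriodicPt_one_vadd_iff, Fin.natCast_self]
  exact zero_vadd (Fin i) w

theorem aperiodicWord_iff_minimalPeriod_one_vadd {w : Fin i → Fin k} :
    AperiodicWord i k w ↔ minimalPeriod ((1 : Fin i) +ᵥ ·) w = i := by
  refine ⟨fun h => (minimalPeriod_one_vadd_dvd w).antisymm ?_, fun h r hr => ?_⟩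
  · exact Fin.natCast_eq_zero.1
      (h _ (isPeriodicPt_one_vadd_iff.1 (isPeriodicPt_minimalPeriod _ w)))
  · rw [← Fin.cast_val_eq_self r] at hr ⊢
    rw [← isPeriodicPt_one_vadd_iff, isPeriodicPt_iff_minimalPeriod_dvd, h] at hr
    exact Fin.natCast_eq_zero.2 hr

theorem AperiodicWord.rotWord {w : Fin i → Fin k} (hw : AperiodicWord i k w) (r : Fin i) :
    AperiodicWord i k (rotWord i k r w) := fun s hs =>
  hw s <| (vadd_left_cancel_iff r).1 <| by
    change r +ᵥ s +ᵥ w = r +ᵥ w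
    rw [← add_vadd, add_comm, add_vadd]
    exact hs

theorem sum_rotWord (r : Fin i) (w : Fin i → Fin k) :
    ∑ j, (rotWord i k r w j : ℕ) = ∑ j, (w j : ℕ) :=
  Fintype.sum_equiv (Equiv.addRight r) _ _ fun _ => rfl

theorem isPeriodicPt_one_vadd_iff_exists_comp_modNat {c e : ℕ} [NeZero (c * e)]
    {w : Fin (c * e) → Fin k} :
    IsPeriodicPt ((1 : Fin (c * e)) +ᵥ ·) e w ↔
      ∃ v : Fin e → Fin k, w = v ∘ Fin.modNat := by
  have he : e ∣ c * e := Nat.dvd_mul_left e c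
  have hle : e ≤ c * e := Nat.le_of_dvd (Nat.pos_of_neZero _) he
  constructor
  · refine fun hw => ⟨fun b => w (b.castLE hle), funext fun j => ?_⟩
    have hj : j.modNat.castLE hle + ((e * (j / e) : ℕ) : Fin (c * e)) = j := by
      have : e * (j / e) < c * e := (Nat.mul_div_le j e).trans_lt j.2
      ext
      rw [Fin.val_add, Fin.val_natCast, Nat.mod_eq_of_lt this, Fin.val_castLE, Fin.coe_modNat,
        Nat.mod_add_div, Nat.mod_eq_of_lt j.2]
    have := congrFun (isPeriodicPt_one_vadd_iff.1 (hw.mul_const (j / e))) (j.modNat.castLE hle)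
    rwa [rotWord, hj] at this
  · rintro ⟨v, rfl⟩
    refine isPeriodicPt_one_vadd_iff.2 (funext fun j => congrArg v (Fin.ext ?_))
    rw [Fin.coe_modNat, Fin.coe_modNat, Fin.val_add, Fin.val_natCast, Nat.mod_mod_of_dvd _ he,
      Nat.add_mod, Nat.mod_mod_of_dvd _ he, Nat.mod_self, add_zero, Nat.mod_mod]

theorem card_filter_isPeriodicPt_one_vadd {c e : ℕ} (hce : c * e = i) (m : ℕ) :
    #{w : Fin i → Fin k | ∑ j, (w j : ℕ) = m ∧ IsPeriodicPt ((1 : Fin i) +ᵥ ·) e w} =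
      #{v : Fin e → Fin k | c * ∑ t, (v t : ℕ) = m} := by
  subst hce
  have hc : c ≠ 0 := left_ne_zero_of_mul (NeZero.ne (c * e))
  have hinj : Injective fun v : Fin e → Fin k => v ∘ Fin.modNat :=
    (Fin.modNat_surjective hc).injective_comp_right
  rw [← card_image_of_injective _ hinj]
  congr 1
  ext w
  simp only [mem_filter, mem_univ, true_and, mem_image,
    isPeriodicPt_one_vadd_iff_exists_comp_modNat]
  constructor
  · rintro ⟨hm, v, rfl⟩
    exact ⟨v, by rwa [← smul_eq_mul, ← Fin.sum_comp_modNat], rfl⟩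
  · rintro ⟨v, hv, rfl⟩
    exact ⟨by rwa [← smul_eq_mul, ← Fin.sum_comp_modNat] at hv, v, rfl⟩

end Rotation

/-- The number of aperiodic necklaces of size `i` on `k` symbols with total symbol sum `m`
is `(1/i) Σ_{d ∣ i} μ(d) f(m,k,i,d)`.  Necklaces are equivalence classes of words under
cyclic rotation. -/
theorem aperiodic_necklace_count (i k m : ℕ) [NeZero i] :
    (Nat.card (Quot (fun w w' : {w : Fin i → Fin k //
        AperiodicWord i k w ∧ ∑ j, (w j : ℕ) = m} =>
          ∃ r : Fin i, rotWord i k r w.val = w'.val)) : ℚ) =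
      (1 / i) * ∑ d ∈ i.divisors, (ArithmeticFunction.moebius d : ℚ) * necklaceCoeff m k i d := by
  set f : (Fin i → Fin k) → Fin i → Fin k := ((1 : Fin i) +ᵥ ·)
  set words : Finset (Fin i → Fin k) := {w | ∑ j, (w j : ℕ) = m}
  have hfree := AddAction.card_subtype_eq_card_quot_mul_card (G := Fin i)
    (fun w : Fin i → Fin k => AperiodicWord i k w ∧ ∑ j, (w j : ℕ) = m)
    (fun r w hw => ⟨hw.1.rotWord r, (sum_rotWord r w).trans hw.2⟩) (fun r w hw => hw.1 r)
  have haperiodic : Nat.card {w // AperiodicWord i k w ∧ ∑ j, (w j : ℕ) = m} =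
      #{w ∈ words | minimalPeriod f w = i} := by
    classical
    rw [Nat.card_eq_fintype_card, Fintype.card_subtype, filter_filter]
    simp only [aperiodicWord_iff_minimalPeriod_one_vadd, and_comm, f]
  have hfixed (d : ℕ) (hd : d ∈ i.divisors) :
      (#{w ∈ words | IsPeriodicPt f (i / d) w} : ℚ) = necklaceCoeff m k i d := by
    rw [filter_filter, necklaceCoeff, Polynomial.coeff_sum_range_X_pow_mul_pow,
      card_filter_isPeriodicPt_one_vadd (Nat.mul_div_cancel' (Nat.dvd_of_mem_divisors hd))]
  rw [← sum_congr rfl fun d hd => congrArg _ (hfixed d hd),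
    ← card_filter_minimalPeriod_eq f words (Nat.pos_of_neZero i), ← haperiodic, hfree,
    Nat.card_fin, Nat.cast_mul, one_div, mul_comm,
    mul_inv_cancel_right₀ (Nat.cast_ne_zero.2 (NeZero.ne i))]
  rfl
end

section
/- For every positive integer n, the number of transitive (single n-cycle) unimodal permutations of {1,...,n} equals (1/(2n)) · Σ_{d | n, d odd} μ(d) · 2^{n/d}. -/
open Finset

/-- A permutation of `{1,…,n}` (modeled on `Fin n`) is unimodal if it increases up to some
position `i` and decreases from position `i` on. -/
def Unimodal {n : ℕ} (w : Equiv.Perm (Fin n)) : Prop :=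
  ∃ i : Fin n, (∀ a b : Fin n, a < b → b ≤ i → w a < w b) ∧
    (∀ a b : Fin n, i ≤ a → a < b → w b < w a)

/-!
Cut a unimodal permutation `w` of `Fin n` at a position `c` such that `w` increases on `[0, c)`,
decreases on `[c, n)`, and `n - c` is odd. For a transitive `w`, recording for `k = 0, …, n - 1`
whether `w^k x ≥ c` turns a base point `x` into a cyclic binary word of odd weight `n - c`.
If two points `x < y` have the same itinerary up to time `k`, then `w^k` keeps them in order iff
that itinerary has an even number of ones; a full period has `n - c` ones, which is odd, while
`w^n = 1`. Hence distinct points have distinct itineraries, and points are ordered like their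
itineraries in the kneading order of the tent map. So the word is aperiodic, and ranking the
rotations of an aperiodic odd-weight word in the kneading order recovers `w` and `x`: `n` times
the number of transitive unimodal permutations is the number `A(n)` of aperiodic binary words of
length `n` with odd weight.

Sorting the `2^(m-1)` odd-weight words of length `m` by their minimal period `e`, for which
`m / e` must be odd, gives `2^(m-1) = ∑_{e ∣ m, m/e odd} A(e)`; Möbius inversion twisted by the
indicator of the odd numbers yields `2 A(n) = ∑_{d ∣ n, d odd} μ(d) 2^(n/d)`.
-/

open Function

theorem Fin.val_lt_card_iff_mem {n : ℕ} {s : Finset (Fin n)} (hs : IsLowerSet (s : Set (Fin n)))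
    (x : Fin n) : (x : ℕ) < #s ↔ x ∈ s := by
  constructor
  · intro hx
    by_contra hxs
    have hsub : s ⊆ Iio x := fun y hy => mem_Iio.2 (lt_of_not_ge fun hxy => hxs (hs hxy hy))
    have := card_le_card hsub
    rw [Fin.card_Iio] at this
    omega
  · intro hxs
    have := card_le_card fun y hy => hs (mem_Iic.1 hy) hxs
    rw [Fin.card_Iic] at this
    omega

namespace CyclicWord

noncomputable def weight {α : Type*} (s : α → Bool) : ℕ := Nat.card {a // s a}

theorem weight_eq_card {α : Type*} [Fintype α] (s : α → Bool) : weight s = #{a | s a} := by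
  rw [weight, Nat.card_eq_fintype_card, Fintype.card_subtype]

theorem card_filter_odd_weight {α : Type*} [Fintype α] [DecidableEq α] (a₀ : α) :
    #{s : α → Bool | Odd (weight s)} = 2 ^ (Fintype.card α - 1) := by
  let flip : (α → Bool) → (α → Bool) := fun s => update s a₀ (!s a₀)
  have flip_involutive : Involutive flip := fun s => by simp [flip]
  have weight_split (s : α → Bool) :
      weight s = ∑ a ∈ univ.erase a₀, (if s a then 1 else 0) + if s a₀ then 1 else 0 := by
    rw [weight_eq_card, card_filter, sum_erase_add _ _ (mem_univ a₀)]
  have even_weight_flip (s : α → Bool) : Even (weight (flip s)) ↔ Odd (weight s) := by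
    have hrest : ∑ a ∈ univ.erase a₀, (if flip s a then 1 else 0) =
        ∑ a ∈ univ.erase a₀, (if s a then 1 else 0) :=
      sum_congr rfl fun a ha => by simp [flip, update_of_ne (ne_of_mem_erase ha)]
    rw [weight_split, weight_split s, hrest]
    cases h : s a₀ <;> simp [flip, h, Nat.even_add_one, Nat.odd_add_one]
  have hflip : #{s : α → Bool | Odd (weight s)} = #{s : α → Bool | ¬Odd (weight s)} :=
    card_equiv flip_involutive.toPerm fun s => by simp [even_weight_flip]
  have htot := card_filter_add_card_filter_not (s := (univ : Finset (α → Bool)))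
    fun s => Odd (weight s)
  rw [card_univ, Fintype.card_fun, Fintype.card_bool, ← hflip] at htot
  obtain ⟨k, hk⟩ := Nat.exists_eq_add_one_of_ne_zero (Fintype.card_pos_iff.2 ⟨a₀⟩).ne'
  rw [hk, pow_succ] at htot
  rw [hk, Nat.add_sub_cancel]
  omega

variable {m e : ℕ}

theorem weight_le [NeZero m] (s : ZMod m → Bool) : weight s ≤ m := by
  simpa [weight_eq_card] using card_le_univ (filter (fun a => s a = true) univ)

theorem count_natCast_eq_weight [NeZero m] (s : ZMod m → Bool) :
    Nat.count (fun k => s k) m = weight s := by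
  rw [Nat.count_eq_card_filter_range, weight_eq_card]
  refine card_nbij' (fun k => (k : ZMod m)) ZMod.val (fun k hk => ?_) (fun a ha => ?_)
    (fun k hk => ?_) (fun a _ => ZMod.natCast_zmod_val a)
  · simp only [coe_filter, mem_range, mem_univ, true_and, Set.mem_ofPred_eq] at hk ⊢
    exact hk.2
  · simp only [coe_filter, mem_univ, true_and, Set.mem_ofPred_eq, mem_range] at ha ⊢
    exact ⟨ZMod.val_lt a, by rwa [ZMod.natCast_zmod_val]⟩
  · simp only [coe_filter, mem_range, Set.mem_ofPred_eq] at hk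
    exact ZMod.val_natCast_of_lt hk.1

def Aperiodic (s : ZMod m → Bool) : Prop := ∀ j, Periodic s j → j = 0

abbrev AperiodicOddWord (m : ℕ) : Type := {s : ZMod m → Bool // Aperiodic s ∧ Odd (weight s)}

def rotate (s : ZMod m → Bool) : ZMod m → Bool := fun a => s (a + 1)

noncomputable def minPeriod (s : ZMod m → Bool) : ℕ := minimalPeriod rotate s

theorem rotate_iterate (s : ZMod m → Bool) (j : ℕ) : rotate^[j] s = fun a => s (a + j) := by
  induction j with
  | zero => simp
  | succ j ih =>
    rw [iterate_succ_apply', ih]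
    funext a
    simp only [rotate, Nat.cast_succ, add_assoc, add_comm (1 : ZMod m)]

theorem periodic_natCast_iff_minPeriod_dvd {s : ZMod m → Bool} {j : ℕ} :
    Periodic s j ↔ minPeriod s ∣ j := by
  rw [minPeriod, ← isPeriodicPt_iff_minimalPeriod_dvd, IsPeriodicPt, IsFixedPt, rotate_iterate,
    funext_iff]
  rfl

theorem minPeriod_dvd (s : ZMod m → Bool) : minPeriod s ∣ m :=
  periodic_natCast_iff_minPeriod_dvd.1 fun a => by simp

theorem aperiodic_iff_minPeriod_eq [NeZero m] {s : ZMod m → Bool} :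
    Aperiodic s ↔ minPeriod s = m := by
  refine ⟨fun h => Nat.dvd_antisymm (minPeriod_dvd s) ?_, fun h j hj => ?_⟩
  · rw [← ZMod.natCast_eq_zero_iff]
    exact h _ (periodic_natCast_iff_minPeriod_dvd.2 dvd_rfl)
  · rw [← ZMod.natCast_zmod_val j] at hj ⊢
    rw [ZMod.natCast_eq_zero_iff]
    have hdvd := periodic_natCast_iff_minPeriod_dvd.1 hj
    rwa [h] at hdvd

section Lift

variable (h : e ∣ m)

def lift (σ : ZMod e → Bool) : ZMod m → Bool := σ ∘ ZMod.castHom h (ZMod e)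

def restrict (e : ℕ) (s : ZMod m → Bool) : ZMod e → Bool := fun b => s b.val

include h in
theorem periodic_lift_iff {σ : ZMod e → Bool} {j : ℕ} :
    Periodic (lift h σ) j ↔ Periodic σ j := by
  constructor
  · intro hp b
    obtain ⟨a, rfl⟩ := ZMod.castHom_surjective h b
    simpa only [lift, comp_apply, map_add, map_natCast] using hp a
  · intro hp a
    simpa only [lift, comp_apply, map_add, map_natCast] using hp (ZMod.castHom h (ZMod e) a)

theorem minPeriod_lift (σ : ZMod e → Bool) : minPeriod (lift h σ) = minPeriod σ :=
  Nat.dvd_antisymm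
    (periodic_natCast_iff_minPeriod_dvd.1 <|
      (periodic_lift_iff h).2 <| periodic_natCast_iff_minPeriod_dvd.2 dvd_rfl)
    (periodic_natCast_iff_minPeriod_dvd.1 <|
      (periodic_lift_iff h).1 <| periodic_natCast_iff_minPeriod_dvd.2 dvd_rfl)

theorem restrict_lift [NeZero e] (σ : ZMod e → Bool) : restrict e (lift h σ) = σ := by
  funext b
  simp [restrict, lift]

theorem lift_restrict [NeZero m] {s : ZMod m → Bool} (hs : Periodic s e) :
    lift h (restrict e s) = s := by
  funext a
  have ha : a = ((a.val % e : ℕ) : ZMod m) + ((a.val / e : ℕ) : ZMod m) * e := by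
    rw [← Nat.cast_mul, ← Nat.cast_add, mul_comm, Nat.mod_add_div, ZMod.natCast_zmod_val]
  have hcast : (ZMod.cast a : ZMod e) = (a.val : ZMod e) := by
    rw [← ZMod.cast_natCast h, ZMod.natCast_zmod_val]
  conv_rhs => rw [ha, hs.nat_mul]
  simp only [lift, restrict, comp_apply, ZMod.castHom_apply, hcast, ZMod.val_natCast]

theorem card_fiber_castHom [NeZero m] [NeZero e] (b : ZMod e) :
    #{a : ZMod m | ZMod.castHom h (ZMod e) a = b} = m / e := by
  have hfiber (b : ZMod e) : #{a : ZMod m | ZMod.castHom h (ZMod e) a = b} =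
      #{a : ZMod m | ZMod.castHom h (ZMod e) a = 0} :=
    AddMonoidHom.card_fiber_eq_of_mem_range (ZMod.castHom h (ZMod e)).toAddMonoidHom
      (ZMod.castHom_surjective h b) (ZMod.castHom_surjective h 0)
  have htot := card_eq_sum_card_fiberwise (f := ZMod.castHom h (ZMod e)) (s := univ) (t := univ)
    fun _ _ => mem_univ _
  simp only [hfiber, sum_const, card_univ, ZMod.card, smul_eq_mul] at htot
  have := Nat.mul_div_cancel_left #{a : ZMod m | ZMod.castHom h (ZMod e) a = 0}
    (Nat.pos_of_neZero e)
  rw [hfiber, ← this, ← htot]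

theorem weight_lift [NeZero m] [NeZero e] (σ : ZMod e → Bool) :
    weight (lift h σ) = m / e * weight σ := by
  rw [weight_eq_card, weight_eq_card, card_eq_sum_card_fiberwise (f := ZMod.castHom h (ZMod e))
    (s := {a | lift h σ a}) (t := {b | σ b})
    fun a ha => mem_filter.2 ⟨mem_univ _, (mem_filter.1 ha).2⟩]
  rw [sum_congr rfl fun b hb => ?_, sum_const, smul_eq_mul, mul_comm]
  rw [← card_fiber_castHom h b, filter_filter]
  refine congrArg card (filter_congr fun a _ => and_iff_right_of_imp ?_)
  rintro rfl
  exact (mem_filter.1 hb).2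

include h in
theorem card_minPeriod_eq_card_aperiodic [NeZero m] [NeZero e] (P : ℕ → Prop) :
    Nat.card {s : ZMod m → Bool // P (weight s) ∧ minPeriod s = e} =
      Nat.card {σ : ZMod e → Bool // P (m / e * weight σ) ∧ Aperiodic σ} :=
  Nat.card_congr
    { toFun := fun s =>
        have hlift := lift_restrict h (periodic_natCast_iff_minPeriod_dvd.2 s.2.2.dvd)
        ⟨restrict e s.1, by rw [← weight_lift h, hlift]; exact s.2.1,
          by rw [aperiodic_iff_minPeriod_eq, ← minPeriod_lift h, hlift]; exact s.2.2⟩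
      invFun := fun σ => ⟨lift h σ, by rw [weight_lift]; exact σ.2.1,
        by rw [minPeriod_lift, ← aperiodic_iff_minPeriod_eq]; exact σ.2.2⟩
      left_inv := fun s =>
        Subtype.ext (lift_restrict h (periodic_natCast_iff_minPeriod_dvd.2 s.2.2.dvd))
      right_inv := fun σ => Subtype.ext (restrict_lift h σ) }

end Lift

theorem sum_card_aperiodicOddWord (m : ℕ) [NeZero m] :
    ∑ e ∈ m.divisors with Odd (m / e), Nat.card (AperiodicOddWord e) = 2 ^ (m - 1) := by
  have hcard := card_filter_odd_weight (0 : ZMod m)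
  rw [ZMod.card] at hcard
  rw [← hcard, card_eq_sum_card_fiberwise (f := minPeriod) (t := m.divisors)
    fun s _ => Nat.mem_divisors.2 ⟨minPeriod_dvd s, NeZero.ne m⟩, sum_filter]
  refine sum_congr rfl fun e he => ?_
  have : NeZero e := ⟨(Nat.pos_of_mem_divisors he).ne'⟩
  rw [filter_filter, ← Fintype.card_subtype, ← Nat.card_eq_fintype_card,
    card_minPeriod_eq_card_aperiodic (Nat.dvd_of_mem_divisors he)]
  split_ifs with hodd
  · exact Nat.card_congr (Equiv.subtypeEquivRight fun σ => by simp [Nat.odd_mul, hodd, and_comm])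
  · simp [Nat.odd_mul, hodd]

end CyclicWord

section OddMoebiusInversion

open ArithmeticFunction
open scoped ArithmeticFunction.Moebius ArithmeticFunction.zeta

theorem pmul_moebius_mul_self {R : Type*} [CommRing R] (χ : ArithmeticFunction R) (h1 : χ 1 = 1)
    (hmul : ∀ a b, χ (a * b) = χ a * χ b) : (μ : ArithmeticFunction R).pmul χ * χ = 1 := by
  ext q
  calc ((μ : ArithmeticFunction R).pmul χ * χ) q
      = ∑ x ∈ q.divisorsAntidiagonal,
          χ q * ((μ : ArithmeticFunction R) x.1 * (ζ : ArithmeticFunction R) x.2) := by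
        rw [mul_apply]
        refine sum_congr rfl fun x hx => ?_
        obtain ⟨hx, hq⟩ := Nat.mem_divisorsAntidiagonal.1 hx
        rw [← hx, hmul, pmul_apply, natCoe_apply,
          zeta_apply_ne (right_ne_zero_of_mul (hx ▸ hq))]
        push_cast
        ring
    _ = (1 : ArithmeticFunction R) q := by
        rw [← mul_sum, ← mul_apply, coe_moebius_mul_coe_zeta, one_apply]
        split_ifs with hq
        · rw [hq, h1, one_mul]
        · rw [mul_zero]

theorem sum_moebius_mul_eq_of_sum_odd {R : Type*} [CommRing R] {f g : ℕ → R}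
    (hfg : ∀ m, 0 < m → ∑ e ∈ m.divisors with Odd (m / e), f e = g m) {n : ℕ}
    (hn : 0 < n) :
    ∑ d ∈ n.divisors with Odd d, (μ d : R) * g (n / d) = f n := by
  let χ : ArithmeticFunction R := ⟨fun k => if Odd k then 1 else 0, by simp⟩
  let F : ArithmeticFunction R := ⟨fun k => if k = 0 then 0 else f k, if_pos rfl⟩
  let G : ArithmeticFunction R := ⟨fun k => if k = 0 then 0 else g k, if_pos rfl⟩
  have hG : G = χ * F := by
    ext m
    rcases m.eq_zero_or_pos with rfl | hm
    · simp
    rw [mul_apply, Nat.sum_divisorsAntidiagonal' fun a b => χ a * F b]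
    simp only [G, coe_mk, if_neg hm.ne', ← hfg m hm, sum_filter]
    refine sum_congr rfl fun e he => ?_
    simp [χ, F, (Nat.pos_of_mem_divisors he).ne']
  have hχ : (μ : ArithmeticFunction R).pmul χ * χ = 1 :=
    pmul_moebius_mul_self χ (by simp [χ]) fun a b => by
      simp only [χ, coe_mk, Nat.odd_mul, ite_and]
      split_ifs <;> simp
  have hF : F = (μ : ArithmeticFunction R).pmul χ * G := by rw [hG, ← mul_assoc, hχ, one_mul]
  have hFn := congrArg (fun φ : ArithmeticFunction R => φ n) hF
  simp only [F, coe_mk, if_neg hn.ne'] at hFn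
  rw [hFn, mul_apply,
    Nat.sum_divisorsAntidiagonal fun a b => (μ : ArithmeticFunction R).pmul χ a * G b, sum_filter]
  refine sum_congr rfl fun d hd => ?_
  have hnd : n / d ≠ 0 := (Nat.div_pos (Nat.divisor_le hd) (Nat.pos_of_mem_divisors hd)).ne'
  rw [pmul_apply, intCoe_apply]
  simp only [χ, G, coe_mk, if_neg hnd]
  split_ifs <;> ring

end OddMoebiusInversion

namespace Kneading

open Equiv CyclicWord

section TentOrder

theorem toLex_lt_toLex_iff_of_eq_of_ne {β : Type*} [LinearOrder β] {x y : ℕ → β} {k : ℕ}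
    (hagree : ∀ j < k, x j = y j) (hk : x k ≠ y k) : toLex x < toLex y ↔ x k < y k := by
  refine ⟨fun ⟨i, hi, hlt⟩ => ?_, fun h => ⟨k, hagree, h⟩⟩
  rcases lt_trichotomy i k with hik | rfl | hki
  · simp only [Pi.toLex_apply, hagree i hik, lt_irrefl] at hlt
  · exact hlt
  · exact absurd (hi k hki) hk

theorem exists_forall_lt_eq_and_ne {β : Type*} {x y : ℕ → β} (h : x ≠ y) :
    ∃ k, (∀ j < k, x j = y j) ∧ x k ≠ y k := by
  classical
  have hex : ∃ k, x k ≠ y k := Function.ne_iff.1 h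
  exact ⟨Nat.find hex, fun j hj => not_not.1 (Nat.find_min hex hj), Nat.find_spec hex⟩

theorem count_eq_of_forall_lt_eq {u v : ℕ → Bool} {k : ℕ} (hagree : ∀ j < k, u j = v j) :
    Nat.count (fun j => u j) k = Nat.count (fun j => v j) k := by
  simp only [Nat.count_eq_card_filter_range]
  exact congrArg card (filter_congr fun j hj => by rw [hagree j (mem_range.1 hj)])

/-- The kneading order of the tent map: `u` precedes `v` when, at their first difference `k`,
`u k` says whether `u` has an odd number of `true`s before `k` (`tentKey_lt_iff`). Comparing the
prefix parities lexicographically makes this a linear order. -/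
def tentKey (u : ℕ → Bool) : Lex (ℕ → Bool) :=
  toLex fun k => decide (Odd (Nat.count (fun j => u j) (k + 1)))

theorem tentKey_lt_iff {u v : ℕ → Bool} {k : ℕ} (hagree : ∀ j < k, u j = v j)
    (hk : u k ≠ v k) :
    tentKey u < tentKey v ↔ u k = decide (Odd (Nat.count (fun j => u j) k)) := by
  have hcount := count_eq_of_forall_lt_eq hagree
  rw [tentKey, tentKey, toLex_lt_toLex_iff_of_eq_of_ne (k := k)]
  rotate_left
  · intro j hj
    rw [count_eq_of_forall_lt_eq fun i hi => hagree i (by omega)]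
  all_goals
    simp only [Nat.count_succ, hcount]
    cases hu : u k <;> cases hv : v k <;>
      rcases Nat.even_or_odd (Nat.count (fun j => v j) k) with h | h <;>
      simp_all [Nat.odd_add_one, ← Nat.not_even_iff_odd]

theorem tentKey_injective : Injective tentKey := by
  intro u v huv
  by_contra hne
  obtain ⟨k, hagree, hk⟩ := exists_forall_lt_eq_and_ne hne
  have hvu := tentKey_lt_iff (fun j hj => (hagree j hj).symm) hk.symm
  rw [← count_eq_of_forall_lt_eq hagree] at hvu
  by_cases hP : u k = decide (Odd (Nat.count (fun j => u j) k))
  · exact ((tentKey_lt_iff hagree hk).2 hP).ne huv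
  · refine (hvu.2 ?_).ne huv.symm
    revert hk hP
    cases u k <;> cases v k <;> simp

theorem tentKey_lt_of_false_of_true {u v : ℕ → Bool} (hu : u 0 = false) (hv : v 0 = true) :
    tentKey u < tentKey v :=
  (tentKey_lt_iff (k := 0) (by simp) (by simp [hu, hv])).2 (by simp [hu])

theorem tentKey_tail_lt_iff {u v : ℕ → Bool} (h0 : u 0 = v 0) (hne : u ≠ v) :
    tentKey (fun k => u (k + 1)) < tentKey (fun k => v (k + 1)) ↔
      (tentKey u < tentKey v ↔ u 0 = false) := by
  obtain ⟨k, hagree, hk⟩ := exists_forall_lt_eq_and_ne hne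
  obtain ⟨i, rfl⟩ : ∃ i, k = i + 1 :=
    Nat.exists_eq_add_one_of_ne_zero fun hk0 => hk (hk0 ▸ h0)
  rw [tentKey_lt_iff (k := i) (fun j hj => hagree (j + 1) (by omega)) hk, tentKey_lt_iff hagree hk,
    Nat.count_succ']
  cases u 0 <;> cases u (i + 1) <;> simp [Nat.odd_add_one]

end TentOrder

section Rank

variable {α β : Type*} [Fintype α] [LinearOrder β]

def rank (f : α → β) (a : α) : ℕ := #{b | f b < f a}

theorem rank_lt_rank_iff (f : α → β) {a b : α} : rank f a < rank f b ↔ f a < f b := by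
  refine ⟨fun h => ?_, fun h => card_lt_card ?_⟩
  · by_contra hba
    refine h.not_ge (card_le_card fun c hc => ?_)
    simp only [mem_filter, mem_univ, true_and] at hc ⊢
    exact hc.trans_le (not_lt.1 hba)
  · refine (ssubset_iff_of_subset fun c hc => ?_).2 ⟨a, by simpa using h, by simp⟩
    simp only [mem_filter, mem_univ, true_and] at hc ⊢
    exact hc.trans h

theorem rank_lt_card (f : α → β) (a : α) : rank f a < Fintype.card α :=
  card_lt_univ_of_notMem (x := a) (by simp)

theorem rank_eq_of_lt_iff_lt {n : ℕ} {f : α → β} (e : α ≃ Fin n)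
    (he : ∀ a b, e a < e b ↔ f a < f b) (a : α) : rank f a = e a := by
  rw [rank, card_equiv e (t := Iio (e a)) fun b => by simp [he], Fin.card_Iio]

end Rank

variable {n : ℕ}

section Cut

variable {w : Perm (Fin n)} {c : ℕ}

def IsCut (w : Perm (Fin n)) (c : ℕ) : Prop :=
  StrictMonoOn w {x | (x : ℕ) < c} ∧ StrictAntiOn w {x | c ≤ (x : ℕ)}

theorem _root_.Unimodal.exists_isCut_odd (hu : Unimodal w) : ∃ c, IsCut w c ∧ Odd (n - c) := by
  obtain ⟨i, hinc, hdec⟩ := hu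
  have hcut (c : ℕ) (hc : c = i ∨ c = i + 1) : IsCut w c :=
    ⟨fun a _ b hb hab => hinc a b hab (Fin.le_def.2 (by simp at hb; omega)),
      fun a ha b _ hab => hdec a b (Fin.le_def.2 (by simp at ha; omega)) hab⟩
  by_cases hodd : Odd (n - i)
  · exact ⟨i, hcut i (.inl rfl), hodd⟩
  · refine ⟨i + 1, hcut _ (.inr rfl), ?_⟩
    have := i.isLt
    rw [Nat.odd_iff] at hodd ⊢
    omega

/-- The peak is `c - 1` or `c`, whichever has the larger image. -/
theorem IsCut.unimodal (hc : IsCut w c) (hcn : c < n) : Unimodal w := by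
  have inc (a b : Fin n) (hab : a < b) (hb : (b : ℕ) < c) : w a < w b :=
    hc.1 (show (a : ℕ) < c from (Fin.lt_def.1 hab).trans hb) hb hab
  have dec (a b : Fin n) (ha : c ≤ (a : ℕ)) (hab : a < b) : w b < w a :=
    hc.2 ha (show c ≤ (b : ℕ) from ha.trans (Fin.lt_def.1 hab).le) hab
  rcases Nat.eq_zero_or_pos c with rfl | hc0
  · refine ⟨⟨0, hcn⟩, fun a b hab hb => ?_, fun a b _ => dec a b (Nat.zero_le _)⟩
    exact absurd (Fin.lt_def.1 (hab.trans_le hb)) (Nat.not_lt_zero _)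
  let p : Fin n := ⟨c - 1, by omega⟩
  let q : Fin n := ⟨c, hcn⟩
  by_cases hpq : w p < w q
  · refine ⟨q, fun a b hab hb => ?_, fun a b ha => dec a b ha⟩
    rcases (Fin.le_def.1 hb).lt_or_eq with hb | hb
    · exact inc a b hab hb
    obtain rfl : b = q := Fin.ext hb
    rcases (show (a : ℕ) ≤ c - 1 by simp [Fin.lt_def, q] at hab; omega).lt_or_eq with ha | ha
    · exact (inc a p ha (by simp [p]; omega)).trans hpq
    · rwa [show a = p from Fin.ext ha]
  · have hqp : w q < w p :=
      (lt_or_gt_of_ne (w.injective.ne (by simp [Fin.ext_iff, p, q]; omega))).resolve_left hpq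
    refine ⟨p, fun a b hab hb => inc a b hab (by simp [Fin.le_def, p] at hb; omega),
      fun a b ha hab => ?_⟩
    rcases (Fin.le_def.1 ha).lt_or_eq with ha | ha
    · exact dec a b (by simp [p] at ha; omega) hab
    obtain rfl : a = p := (Fin.ext ha).symm
    rcases (show c ≤ (b : ℕ) by simp [Fin.lt_def, p] at hab; omega).lt_or_eq with hb | hb
    · exact (dec q b le_rfl hb).trans hqp
    · rwa [show b = q from Fin.ext hb.symm]

theorem IsCut.eq_of_odd {c' : ℕ} (hc : IsCut w c) (hc' : IsCut w c') (hodd : Odd (n - c))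
    (hodd' : Odd (n - c')) : c = c' := by
  by_contra hne
  wlog hlt : c < c' generalizing c c'
  · exact this hc' hc hodd' hodd (Ne.symm hne) (by omega)
  have hcn : c' < n := Nat.lt_of_sub_pos hodd'.pos
  have hc2 : c + 2 ≤ c' := by
    rw [Nat.odd_iff] at hodd hodd'
    omega
  let a : Fin n := ⟨c, by omega⟩
  let b : Fin n := ⟨c + 1, by omega⟩
  have hab : a < b := Fin.lt_def.2 (by simp [a, b])
  exact (hc.2 (show c ≤ (a : ℕ) from le_rfl) (show c ≤ (b : ℕ) by simp [b]) hab).asymm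
    (hc'.1 (show (a : ℕ) < c' by simp [a]; omega) (show (b : ℕ) < c' by simp [b]; omega) hab)

noncomputable def oddCut (w : Perm (Fin n)) : ℕ := sInf {c | IsCut w c ∧ Odd (n - c)}

theorem isCut_oddCut (h : ∃ c, IsCut w c ∧ Odd (n - c)) :
    IsCut w (oddCut w) ∧ Odd (n - oddCut w) :=
  Nat.sInf_mem h

theorem oddCut_eq (hc : IsCut w c) (hodd : Odd (n - c)) : oddCut w = c :=
  have h := isCut_oddCut ⟨c, hc, hodd⟩
  h.1.eq_of_odd hc h.2 hodd

def itinerary (w : Perm (Fin n)) (c : ℕ) (x : Fin n) (k : ℕ) : Bool :=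
  decide (c ≤ ((w ^ k) x : ℕ))

theorem IsCut.pow_lt_pow_iff (hc : IsCut w c) {x y : Fin n} (hxy : x < y) {k : ℕ}
    (hagree : ∀ j < k, itinerary w c x j = itinerary w c y j) :
    (w ^ k) x < (w ^ k) y ↔ Even (Nat.count (fun j => itinerary w c x j) k) := by
  induction k with
  | zero => simpa using hxy
  | succ k ih =>
    have ih := ih fun j hj => hagree j (by omega)
    have hk : decide (c ≤ ((w ^ k) x : ℕ)) = decide (c ≤ ((w ^ k) y : ℕ)) :=
      hagree k (by omega)
    have hne : (w ^ k) x ≠ (w ^ k) y := (w ^ k).injective.ne hxy.ne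
    rw [pow_succ', Perm.mul_apply, Perm.mul_apply, Nat.count_succ]
    by_cases hx : c ≤ ((w ^ k) x : ℕ)
    · have hy : c ≤ ((w ^ k) y : ℕ) := by simpa [hx] using hk
      rw [hc.2.lt_iff_gt hx hy, itinerary, if_pos (decide_eq_true hx), Nat.even_add_one, ← ih]
      exact ⟨fun h => h.not_gt, fun h => (lt_or_gt_of_ne hne).resolve_left h⟩
    · have hy : ¬c ≤ ((w ^ k) y : ℕ) := by simpa [hx] using hk
      rw [hc.1.lt_iff_lt (not_le.1 hx) (not_le.1 hy), itinerary, if_neg (by simpa using hx),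
        add_zero, ih]

end Cut

section ShiftPerm

def shiftPerm (e : ZMod n ≃ Fin n) : Perm (Fin n) := e.permCongr (Equiv.addRight 1)

def cutWord (e : ZMod n ≃ Fin n) (c : ℕ) : ZMod n → Bool :=
  fun a => decide (c ≤ (e a : ℕ))

theorem shiftPerm_pow_apply (e : ZMod n ≃ Fin n) (a : ZMod n) (k : ℕ) :
    (shiftPerm e ^ k) (e a) = e (a + k) := by
  induction k with
  | zero => simp
  | succ k ih =>
    rw [pow_succ', Perm.mul_apply, ih]
    simp [shiftPerm, add_assoc]

theorem itinerary_shiftPerm (e : ZMod n ≃ Fin n) (c : ℕ) (a : ZMod n) :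
    itinerary (shiftPerm e) c (e a) = fun k : ℕ => cutWord e c (a + k) := by
  funext k
  simp [itinerary, cutWord, shiftPerm_pow_apply]

variable [NeZero n]

theorem shiftPerm_transitive (e : ZMod n ≃ Fin n) (x y : Fin n) :
    ∃ j : ℕ, (shiftPerm e ^ j) x = y := by
  obtain ⟨a, rfl⟩ := e.surjective x
  obtain ⟨b, rfl⟩ := e.surjective y
  exact ⟨(b - a).val, by rw [shiftPerm_pow_apply, ZMod.natCast_zmod_val, add_sub_cancel]⟩

theorem weight_cutWord (e : ZMod n ≃ Fin n) (c : ℕ) : weight (cutWord e c) = n - c := by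
  rw [weight_eq_card, card_equiv e (t := {y : Fin n | c ≤ (y : ℕ)}) fun a => by simp [cutWord]]
  have h := card_filter_add_card_filter_not (s := (univ : Finset (Fin n))) fun y => (y : ℕ) < c
  rw [Fin.card_filter_val_lt, card_univ, Fintype.card_fin] at h
  simp only [not_lt] at h
  omega

end ShiftPerm

section Transitive

variable {w : Perm (Fin n)} (htr : ∀ a b : Fin n, ∃ j : ℕ, (w ^ j) a = b)
include htr

theorem pow_eq_pow_of_apply_eq {i j : ℕ} {x : Fin n} (h : (w ^ i) x = (w ^ j) x) :
    w ^ i = w ^ j := by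
  ext y
  obtain ⟨k, rfl⟩ := htr x y
  simp only [← Perm.mul_apply, ← pow_add, add_comm i, add_comm j]
  rw [pow_add, pow_add, Perm.mul_apply, Perm.mul_apply, h]

variable [NeZero n]

theorem orderOf_eq_of_transitive : orderOf w = n := by
  let x : Fin n := ⟨0, Nat.pos_of_neZero n⟩
  have hbij : Bijective fun i : Fin (orderOf w) => (w ^ (i : ℕ)) x := by
    refine ⟨fun i j hij => Fin.ext ?_, fun y => ?_⟩
    · exact (pow_eq_pow_iff_modEq.1 (pow_eq_pow_of_apply_eq htr hij)).eq_of_lt_of_lt i.isLt j.isLt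
    · obtain ⟨j, rfl⟩ := htr x y
      exact ⟨⟨j % orderOf w, Nat.mod_lt _ (orderOf_pos w)⟩, by simp [pow_mod_orderOf]⟩
  simpa using Fintype.card_of_bijective hbij

theorem pow_card_eq_one_of_transitive : w ^ n = 1 := by
  have h := pow_orderOf_eq_one w
  rwa [orderOf_eq_of_transitive htr] at h

noncomputable def orbitEquiv (x : Fin n) : ZMod n ≃ Fin n :=
  Equiv.ofBijective (fun a => (w ^ a.val) x) <| by
    refine (Fintype.bijective_iff_surjective_and_card _).2 ⟨fun y => ?_, by simp⟩
    obtain ⟨j, rfl⟩ := htr x y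
    refine ⟨j, ?_⟩
    simp only [ZMod.val_natCast, ← orderOf_eq_of_transitive htr, pow_mod_orderOf]

theorem orbitEquiv_apply (x : Fin n) (a : ZMod n) : orbitEquiv htr x a = (w ^ a.val) x := rfl

theorem orbitEquiv_natCast (x : Fin n) (k : ℕ) : orbitEquiv htr x k = (w ^ k) x := by
  have h := pow_mod_orderOf w k
  rw [orderOf_eq_of_transitive htr] at h
  rw [orbitEquiv_apply, ZMod.val_natCast, h]

theorem shiftPerm_orbitEquiv (x : Fin n) : shiftPerm (orbitEquiv htr x) = w := by
  ext y
  obtain ⟨a, rfl⟩ := (orbitEquiv htr x).surjective y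
  simp only [shiftPerm, permCongr_apply, symm_apply_apply, coe_addRight]
  rw [← ZMod.natCast_zmod_val a, ← Nat.cast_succ, orbitEquiv_natCast, orbitEquiv_natCast,
    pow_succ', Perm.mul_apply]

theorem isCut_shiftPerm_orbitEquiv (hu : Unimodal w) (x : Fin n) :
    IsCut (shiftPerm (orbitEquiv htr x)) (oddCut w) ∧ Odd (n - oddCut w) := by
  rw [shiftPerm_orbitEquiv]
  exact isCut_oddCut hu.exists_isCut_odd

theorem strictMono_tentKey_itinerary {c : ℕ} (hc : IsCut w c) (hodd : Odd (n - c)) :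
    StrictMono fun x => tentKey (itinerary w c x) := by
  intro x y hxy
  have hcount : Nat.count (fun j => itinerary w c x j) n = n - c := by
    rw [← weight_cutWord (orbitEquiv htr x) c, ← count_natCast_eq_weight]
    simp [itinerary, cutWord, orbitEquiv_natCast]
  have hne : itinerary w c x ≠ itinerary w c y := fun h => by
    have := hc.pow_lt_pow_iff hxy (k := n) fun j _ => congrFun h j
    rw [pow_card_eq_one_of_transitive htr, hcount] at this
    exact Nat.not_even_iff_odd.2 hodd (this.1 hxy)
  obtain ⟨k, hagree, hk⟩ := exists_forall_lt_eq_and_ne hne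
  have hlt := hc.pow_lt_pow_iff hxy hagree
  have hxy' : (w ^ k) x ≠ (w ^ k) y := (w ^ k).injective.ne hxy.ne
  show tentKey _ < tentKey _
  rw [tentKey_lt_iff hagree hk]
  simp only [itinerary] at hk
  rcases Nat.even_or_odd (Nat.count (fun j => itinerary w c x j) k) with he | ho
  · have hpq := Fin.lt_def.1 (hlt.2 he)
    have hP : ¬c ≤ ((w ^ k) x : ℕ) := fun hP => hk (by simp [hP, hP.trans hpq.le])
    rw [show itinerary w c x k = false by simpa [itinerary] using hP]
    exact (decide_eq_false (Nat.not_odd_iff_even.2 he)).symm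
  · have hqp := Fin.lt_def.1 ((lt_or_gt_of_ne hxy').resolve_left
      fun h => Nat.not_even_iff_odd.2 ho (hlt.1 h))
    have hP : c ≤ ((w ^ k) x : ℕ) := by
      by_contra hP
      exact hk (by rw [decide_eq_false hP, decide_eq_false (by omega)])
    rw [show itinerary w c x k = true by simpa [itinerary] using hP]
    exact (decide_eq_true ho).symm

end Transitive

theorem orbitEquiv_shiftPerm [NeZero n] (e : ZMod n ≃ Fin n) :
    orbitEquiv (shiftPerm_transitive e) (e 0) = e := by
  ext a
  rw [orbitEquiv_apply, shiftPerm_pow_apply, zero_add, ZMod.natCast_zmod_val]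

section RotationKey

variable {s : ZMod n → Bool} {c : ℕ}

def rotationKey (s : ZMod n → Bool) (a : ZMod n) : Lex (ℕ → Bool) :=
  tentKey fun k => s (a + k)

theorem rotationKey_lt_of_false_of_true {a b : ZMod n} (ha : s a = false) (hb : s b = true) :
    rotationKey s a < rotationKey s b :=
  tentKey_lt_of_false_of_true (by simpa using ha) (by simpa using hb)

theorem rotationKey_add_one_lt_iff {a b : ZMod n} (hab : s a = s b)
    (hlt : rotationKey s a < rotationKey s b) :
    rotationKey s (a + 1) < rotationKey s (b + 1) ↔ s a = false := by
  have htail (a : ZMod n) : rotationKey s (a + 1) = tentKey fun k => s (a + (k + 1 : ℕ)) := by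
    simp only [rotationKey]
    congr 1
    funext k
    push_cast
    ring_nf
  have hlt' : (tentKey fun k : ℕ => s (a + k)) < tentKey fun k : ℕ => s (b + k) := hlt
  rw [htail, htail, tentKey_tail_lt_iff (by simpa using hab) fun h => hlt.ne (congrArg tentKey h)]
  simp [hlt']

variable [NeZero n]

theorem rotationKey_cutWord_lt_iff (e : ZMod n ≃ Fin n) (hc : IsCut (shiftPerm e) c)
    (hodd : Odd (n - c)) (a b : ZMod n) :
    rotationKey (cutWord e c) a < rotationKey (cutWord e c) b ↔ e a < e b := by
  rw [rotationKey, rotationKey, ← itinerary_shiftPerm, ← itinerary_shiftPerm]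
  exact (strictMono_tentKey_itinerary (shiftPerm_transitive e) hc hodd).lt_iff_lt

theorem rotationKey_injective (hs : Aperiodic s) : Injective (rotationKey s) := by
  intro a b h
  have hper : Periodic s (b - a) := fun x => by
    have := congrFun (tentKey_injective h) (x - a).val
    simp only [ZMod.natCast_zmod_val, add_sub_cancel] at this
    rw [this]
    ring_nf
  exact (sub_eq_zero.1 (hs _ hper)).symm

theorem aperiodic_cutWord (e : ZMod n ≃ Fin n) (hc : IsCut (shiftPerm e) c) (hodd : Odd (n - c)) :
    Aperiodic (cutWord e c) := by
  intro j hj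
  have hkey : rotationKey (cutWord e c) j = rotationKey (cutWord e c) 0 := by
    simp only [rotationKey, zero_add]
    congr 1
    funext k
    rw [add_comm]
    exact hj k
  refine e.injective (le_antisymm ?_ ?_) <;>
    rw [← not_lt, ← rotationKey_cutWord_lt_iff e hc hodd, hkey] <;> exact lt_irrefl _

noncomputable def rankEquiv (hs : Aperiodic s) : ZMod n ≃ Fin n :=
  Equiv.ofBijective (fun a => ⟨rank (rotationKey s) a, by simpa using rank_lt_card _ a⟩) <| by
    refine (Fintype.bijective_iff_injective_and_card _).2 ⟨fun a b hab => ?_, by simp⟩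
    have hab : rank (rotationKey s) a = rank (rotationKey s) b := Fin.val_eq_of_eq hab
    exact rotationKey_injective hs (le_antisymm
      (not_lt.1 fun h => ((rank_lt_rank_iff _).2 h).ne' hab)
      (not_lt.1 fun h => ((rank_lt_rank_iff _).2 h).ne hab))

theorem val_rankEquiv (hs : Aperiodic s) (a : ZMod n) :
    (rankEquiv hs a : ℕ) = rank (rotationKey s) a := rfl

theorem rankEquiv_lt_iff (hs : Aperiodic s) {a b : ZMod n} :
    rankEquiv hs a < rankEquiv hs b ↔ rotationKey s a < rotationKey s b := by
  rw [Fin.lt_def, val_rankEquiv, val_rankEquiv]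
  exact rank_lt_rank_iff _

theorem rankEquiv_cutWord (e : ZMod n ≃ Fin n) (hc : IsCut (shiftPerm e) c) (hodd : Odd (n - c))
    (hs : Aperiodic (cutWord e c)) : rankEquiv hs = e := by
  ext a
  rw [val_rankEquiv]
  exact rank_eq_of_lt_iff_lt e (fun a b => (rotationKey_cutWord_lt_iff e hc hodd a b).symm) a

theorem val_rankEquiv_lt_iff (hs : Aperiodic s) (a : ZMod n) :
    (rankEquiv hs a : ℕ) < n - weight s ↔ s a = false := by
  let S : Finset (Fin n) := {y | s ((rankEquiv hs).symm y) = false}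
  have hS : IsLowerSet (S : Set (Fin n)) := fun y z hzy hy => by
    simp only [S, coe_filter, mem_univ, true_and, Set.mem_ofPred_eq] at hy ⊢
    by_contra hz
    have hlt := rotationKey_lt_of_false_of_true hy (Bool.not_eq_false _ ▸ hz)
    rw [← rankEquiv_lt_iff hs, apply_symm_apply, apply_symm_apply] at hlt
    exact hzy.not_gt hlt
  have hcard : #S = n - weight s := by
    rw [card_equiv (rankEquiv hs).symm (t := {a | s a = false}) (by simp [S]), weight_eq_card]
    have h := card_filter_add_card_filter_not (s := univ) fun a : ZMod n => s a = true
    simp only [Bool.not_eq_true, card_univ, ZMod.card] at h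
    omega
  rw [← hcard, Fin.val_lt_card_iff_mem hS]
  simp [S]

theorem cutWord_rankEquiv (hs : Aperiodic s) : cutWord (rankEquiv hs) (n - weight s) = s := by
  funext a
  have h := val_rankEquiv_lt_iff hs a
  rw [cutWord]
  cases hsa : s a <;> simp_all
  omega

theorem isCut_shiftPerm_rankEquiv (hs : Aperiodic s) :
    IsCut (shiftPerm (rankEquiv hs)) (n - weight s) := by
  set ρ := rankEquiv hs
  have hshift (y : Fin n) : shiftPerm ρ y = ρ (ρ.symm y + 1) := rfl
  have hkey {y z : Fin n} (hyz : y < z) :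
      rotationKey s (ρ.symm y) < rotationKey s (ρ.symm z) := by
    rwa [← rankEquiv_lt_iff hs, apply_symm_apply, apply_symm_apply]
  have hval (y : Fin n) : (y : ℕ) < n - weight s ↔ s (ρ.symm y) = false := by
    rw [← val_rankEquiv_lt_iff hs, show rankEquiv hs (ρ.symm y) = y from ρ.apply_symm_apply y]
  constructor
  · intro y hy z hz hyz
    have hsy := (hval y).1 hy
    rw [hshift, hshift, rankEquiv_lt_iff,
      rotationKey_add_one_lt_iff (hsy.trans ((hval z).1 hz).symm) (hkey hyz)]
    exact hsy
  · intro y hy z hz hyz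
    have hsy : s (ρ.symm y) = true := by rw [← Bool.not_eq_false, ← hval]; exact not_lt.2 hy
    have hsz : s (ρ.symm z) = true := by rw [← Bool.not_eq_false, ← hval]; exact not_lt.2 hz
    have hnlt := (rotationKey_add_one_lt_iff (hsy.trans hsz.symm) (hkey hyz)).not.2 (by simp [hsy])
    rw [hshift, hshift, rankEquiv_lt_iff]
    refine lt_of_le_of_ne (not_lt.1 hnlt) fun h => hyz.ne' ?_
    simpa using rotationKey_injective hs h

theorem oddCut_shiftPerm_rankEquiv (hs : Aperiodic s) (hodd : Odd (weight s)) :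
    oddCut (shiftPerm (rankEquiv hs)) = n - weight s :=
  oddCut_eq (isCut_shiftPerm_rankEquiv hs) (by rwa [Nat.sub_sub_self (weight_le s)])

end RotationKey

abbrev TransitiveUnimodal (n : ℕ) : Type :=
  {w : Perm (Fin n) // Unimodal w ∧ ∀ a b : Fin n, ∃ j : ℕ, (w ^ j) a = b}

variable [NeZero n]

noncomputable def itineraryEquiv : TransitiveUnimodal n × Fin n ≃ AperiodicOddWord n where
  toFun p :=
    have hcut := isCut_shiftPerm_orbitEquiv p.1.2.2 p.1.2.1 p.2
    ⟨cutWord (orbitEquiv p.1.2.2 p.2) (oddCut p.1.1), aperiodic_cutWord _ hcut.1 hcut.2,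
      by rw [weight_cutWord]; exact hcut.2⟩
  invFun s :=
    (⟨shiftPerm (rankEquiv s.2.1),
      (isCut_shiftPerm_rankEquiv s.2.1).unimodal (Nat.sub_lt (Nat.pos_of_neZero n) s.2.2.pos),
      shiftPerm_transitive _⟩, rankEquiv s.2.1 0)
  left_inv := by
    rintro ⟨⟨w, hu, htr⟩, x⟩
    have hcut := isCut_shiftPerm_orbitEquiv htr hu x
    have he := rankEquiv_cutWord _ hcut.1 hcut.2
    refine Prod.ext (Subtype.ext ?_) ?_
    · exact (congrArg shiftPerm (he _)).trans (shiftPerm_orbitEquiv htr x)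
    · show rankEquiv _ 0 = x
      simp [he, orbitEquiv_apply]
  right_inv := by
    rintro ⟨s, hs, hodd⟩
    refine Subtype.ext ?_
    simp only [orbitEquiv_shiftPerm, oddCut_shiftPerm_rankEquiv hs hodd, cutWord_rankEquiv]

theorem card_transitiveUnimodal_mul :
    Nat.card (TransitiveUnimodal n) * n = Nat.card (AperiodicOddWord n) := by
  rw [← Nat.card_congr itineraryEquiv, Nat.card_prod, Nat.card_eq_fintype_card (α := Fin n),
    Fintype.card_fin]

end Kneading

open CyclicWord Kneading

/-- The number of transitive (single `n`-cycle) unimodal permutations of `{1,…,n}` is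
`(1/(2n)) Σ_{d ∣ n, d odd} μ(d) 2^{n/d}`. -/
theorem card_transitive_unimodal (n : ℕ) (hn : 0 < n) :
    (Nat.card {w : Equiv.Perm (Fin n) // Unimodal w ∧
        ∀ a b : Fin n, ∃ j : ℕ, (w ^ j) a = b} : ℚ) =
      (1 / (2 * n)) * ∑ d ∈ n.divisors.filter (fun d => Odd d),
        (ArithmeticFunction.moebius d : ℚ) * 2 ^ (n / d) := by
  have : NeZero n := ⟨hn.ne'⟩
  have hsum (m : ℕ) (hm : 0 < m) :
      ∑ e ∈ m.divisors with Odd (m / e), (2 * Nat.card (AperiodicOddWord e) : ℚ) = 2 ^ m := by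
    have : NeZero m := ⟨hm.ne'⟩
    rw [← mul_sum, ← Nat.cast_sum, sum_card_aperiodicOddWord, Nat.cast_pow, Nat.cast_ofNat,
      ← pow_succ', Nat.sub_add_cancel hm]
  rw [sum_moebius_mul_eq_of_sum_odd hsum hn, ← card_transitiveUnimodal_mul, Nat.cast_mul]
  field_simp
end

section
/- Let N_r be the number of signed permutations in the hyperoctahedral group C_n with exactly r cyclic descents, and let A_r be the number of permutations in S_n with exactly r descents. Then N_{r+1} = 2^n · A_r for all 0 ≤ r ≤ n-1. -/
/-!
Append the letter `0` to the window `w(1) ⋯ w(n)` and compare letters in the order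
`1 < ⋯ < n < 0 < -n < ⋯ < -1`. The descent at `n` and the cyclic descent at `1` of `w` then
say `w(n) > 0` and `0 > w(1)`, so the cyclic descents of `w` are the descents of the word
`w(1) ⋯ w(n) 0` read cyclically. Rotating this word to start at its largest letter, they become one descent plus
the descents of the remaining `n` letters, i.e. of their standardization `u ∈ S_n`.
The map `w ↦ (u, signs of w indexed by value)` is injective: the signs determine the set of
letters, `u` then determines the rotated word, and the position of `0` determines the rotation.
Hence it is a bijection `C_n → S_n × {±1}ⁿ` carrying `r + 1` cyclic descents to `r` descents.
-/

open Finset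

/-- The number of descents of a permutation of `{1,…,n}` (modeled on `Fin n`):
positions `i` with `1 ≤ i ≤ n-1` and `w(i) > w(i+1)`. -/
def descCount (n : ℕ) (w : Equiv.Perm (Fin n)) : ℕ :=
  (Finset.univ.filter (fun i : Fin (n - 1) =>
    w ⟨i.val + 1, by have := i.isLt; omega⟩ < w ⟨i.val, by have := i.isLt; omega⟩)).card

/-- The signed value `w(i) ∈ {±1,…,±n}` of a signed permutation, modeled as a pair of a
permutation of `Fin n` and a sign vector. -/
def sval (n : ℕ) (p : Equiv.Perm (Fin n) × (Fin n → Bool)) (i : Fin n) : ℤ :=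
  if p.2 i then -((p.1 i : ℕ) + 1) else ((p.1 i : ℕ) + 1)

/-- The rank of a signed value in the linear order `1 < 2 < ⋯ < n < -n < ⋯ < -2 < -1`. -/
def skey (n : ℕ) (a : ℤ) : ℤ := if 0 < a then a else 2 * n + 1 + a

/-- The number of (type `C`) descents of a signed permutation: positions `1 ≤ i ≤ n-1` with
`w(i) > w(i+1)` in the order `1 < ⋯ < n < -n < ⋯ < -1`, together with position `n`
when `w(n) < 0`. -/
def descCountC (n : ℕ) (p : Equiv.Perm (Fin n) × (Fin n → Bool)) : ℕ :=
  (Finset.univ.filter (fun i : Fin n =>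
    (if h : i.val + 1 < n then
        decide (skey n (sval n p ⟨i.val + 1, h⟩) < skey n (sval n p i))
      else decide (sval n p i < 0)) = true)).card

/-- The number of cyclic descents: all descents together with a cyclic descent at
position `1` when `w(1) > 0`. -/
def cdescCountC (n : ℕ) (p : Equiv.Perm (Fin n) × (Fin n → Bool)) : ℕ :=
  descCountC n p + (if h : 0 < n then (if 0 < sval n p ⟨0, h⟩ then 1 else 0) else 0)

open Function

theorem eq_of_comp_add_left_eq {α G : Type*} [AddCommGroup G] {f f' : G → α}
    (hf' : Injective f') {m m' : G} (h : ∀ i, f (m + i) = f' (m' + i)) {a : G}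
    (ha : f a = f' a) : f = f' := by
  have hm : m' = m := by
    have : m' + (a - m) = a := hf' (by rw [← h, add_sub_cancel, ha])
    calc m' = m' + (a - m) - (a - m) := by abel
      _ = m := by rw [this]; abel
  funext x
  simpa [hm] using h (x - m)

namespace Fin

variable {α : Type*} [LinearOrder α] {n : ℕ}

def descentCount (f : Fin (n + 1) → α) : ℕ := #{i : Fin n | f i.succ < f i.castSucc}

/-- Addition in `Fin (n + 1)` wraps around, so `i = last n` compares `f 0` with `f (last n)`. -/
def cyclicDescentCount (f : Fin (n + 1) → α) : ℕ := #{i | f (i + 1) < f i}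

theorem cyclicDescentCount_eq_descentCount_add (f : Fin (n + 1) → α) :
    cyclicDescentCount f = descentCount f + if f 0 < f (last n) then 1 else 0 := by
  simp only [cyclicDescentCount, descentCount, card_filter, sum_univ_castSucc, coeSucc_eq_succ,
    last_add_one]

theorem descentCount_eq_descentCount_tail_add (f : Fin (n + 2) → α) :
    descentCount f = descentCount (tail f) + if f 1 < f 0 then 1 else 0 := by
  rw [descentCount, descentCount, card_filter, card_filter, sum_univ_succ, add_comm]
  rfl

theorem cyclicDescentCount_comp_add_left (f : Fin (n + 1) → α) (m : Fin (n + 1)) :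
    cyclicDescentCount (fun i => f (m + i)) = cyclicDescentCount f := by
  simp only [cyclicDescentCount, card_filter, ← add_assoc]
  exact Equiv.sum_comp (Equiv.addLeft m) fun i => if f (i + 1) < f i then 1 else 0

theorem descentCount_comp_strictMono {β : Type*} [LinearOrder β] {e : α → β}
    (he : StrictMono e) (f : Fin (n + 1) → α) : descentCount (e ∘ f) = descentCount f := by
  simp only [descentCount, comp_apply, he.lt_iff_lt]

theorem cyclicDescentCount_of_le_zero {f : Fin (n + 2) → α} (hf : Injective f)
    (hmax : ∀ i, f i ≤ f 0) : cyclicDescentCount f = descentCount (tail f) + 1 := by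
  have h10 : f 1 < f 0 := (hmax 1).lt_of_ne (hf.ne one_ne_zero)
  rw [cyclicDescentCount_eq_descentCount_add, descentCount_eq_descentCount_tail_add, if_pos h10,
    if_neg (hmax _).not_gt]

theorem range_tail_of_injective {β : Type*} {f : Fin (n + 1) → β} (hf : Injective f) :
    Set.range (tail f) = Set.range f \ {f 0} := by
  rw [range_fin_succ, Set.insert_sdiff_self_of_notMem]
  rintro ⟨i, hi⟩
  exact succ_ne_zero i (hf hi)

noncomputable def maxIndex (f : Fin (n + 1) → α) : Fin (n + 1) :=
  (Finite.exists_max f).choose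

noncomputable def rotateToMax (f : Fin (n + 1) → α) (i : Fin (n + 1)) : α := f (maxIndex f + i)

theorem le_rotateToMax_zero (f : Fin (n + 1) → α) (i : Fin (n + 1)) : f i ≤ rotateToMax f 0 := by
  rw [rotateToMax, add_zero]
  exact (Finite.exists_max f).choose_spec i

theorem range_rotateToMax (f : Fin (n + 1) → α) : Set.range (rotateToMax f) = Set.range f :=
  (Equiv.addLeft (maxIndex f)).surjective.range_comp f

theorem rotateToMax_injective {f : Fin (n + 1) → α} (hf : Injective f) :
    Injective (rotateToMax f) :=
  hf.comp (add_right_injective _)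

theorem cyclicDescentCount_rotateToMax (f : Fin (n + 1) → α) :
    cyclicDescentCount (rotateToMax f) = cyclicDescentCount f :=
  cyclicDescentCount_comp_add_left f _

/-- For injective `g`, `standardize g i` is the rank of `g i` among the values of `g`. -/
def standardize (g : Fin n → α) : Equiv.Perm (Fin n) := (Tuple.sort g)⁻¹

theorem strictMono_comp_sort {g : Fin n → α} (hg : Injective g) :
    StrictMono (g ∘ Tuple.sort g) :=
  (Tuple.monotone_sort g).strictMono_of_injective (hg.comp (Tuple.sort g).injective)

theorem descentCount_standardize {g : Fin (n + 1) → α} (hg : Injective g) :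
    descentCount (standardize g) = descentCount g := by
  conv_rhs => rw [show g = (g ∘ Tuple.sort g) ∘ standardize g by ext; simp [standardize]]
  exact (descentCount_comp_strictMono (strictMono_comp_sort hg) _).symm

theorem eq_of_standardize_eq {g g' : Fin n → α} (hg : Injective g) (hg' : Injective g')
    (hrange : Set.range g = Set.range g') (hstd : standardize g = standardize g') : g = g' := by
  have hsort : Tuple.sort g = Tuple.sort g' := inv_injective hstd
  have hsorted : g ∘ Tuple.sort g = g' ∘ Tuple.sort g' := by
    rw [← (strictMono_comp_sort hg).range_inj (strictMono_comp_sort hg'),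
      (Tuple.sort g).surjective.range_comp, (Tuple.sort g').surjective.range_comp, hrange]
  rw [hsort] at hsorted
  exact (Tuple.sort g').surjective.injective_comp_right hsorted

theorem cyclicDescentCount_eq_descentCount_standardize_add_one {f : Fin (n + 2) → α}
    (hf : Injective f) :
    cyclicDescentCount f = descentCount (standardize (tail (rotateToMax f))) + 1 := by
  have hrot := rotateToMax_injective hf
  have hstd := descentCount_standardize (g := tail (rotateToMax f)) (hrot.comp (succ_injective _))
  rw [hstd, ← cyclicDescentCount_rotateToMax,
    cyclicDescentCount_of_le_zero hrot fun i => le_rotateToMax_zero f _]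

theorem eq_of_standardize_tail_rotateToMax_eq {f f' : Fin (n + 2) → α}
    (hf : Injective f) (hf' : Injective f') (hrange : Set.range f = Set.range f')
    (hlast : f (last _) = f' (last _))
    (hstd : standardize (tail (rotateToMax f)) = standardize (tail (rotateToMax f'))) :
    f = f' := by
  have hrot := rotateToMax_injective hf
  have hrot' := rotateToMax_injective hf'
  have hgreatest (g : Fin (n + 2) → α) : IsGreatest (Set.range g) (rotateToMax g 0) :=
    ⟨⟨_, rfl⟩, Set.forall_mem_range.2 (le_rotateToMax_zero g)⟩
  have hmax : rotateToMax f 0 = rotateToMax f' 0 :=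
    (hgreatest f).unique (hrange ▸ hgreatest f')
  have htail : tail (rotateToMax f) = tail (rotateToMax f') :=
    eq_of_standardize_eq (hrot.comp (succ_injective _)) (hrot'.comp (succ_injective _))
      (by rw [range_tail_of_injective hrot, range_tail_of_injective hrot', range_rotateToMax,
        range_rotateToMax, hrange, hmax]) hstd
  have hrotEq : rotateToMax f = rotateToMax f' := by
    rw [← cons_self_tail (rotateToMax f), ← cons_self_tail (rotateToMax f'), hmax, htail]
  exact eq_of_comp_add_left_eq hf' (congrFun hrotEq) hlast

end Fin

namespace SignedPerm

variable {n : ℕ}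

theorem skey_sval (p : Equiv.Perm (Fin n) × (Fin n → Bool)) (i : Fin n) :
    skey n (sval n p i) = if p.2 i then 2 * (n : ℤ) - (p.1 i : ℕ) else (p.1 i : ℕ) + 1 := by
  have := (p.1 i).isLt
  unfold skey sval
  split_ifs <;> omega

theorem skey_sval_eq_iff {p p' : Equiv.Perm (Fin n) × (Fin n → Bool)} {i j : Fin n} :
    skey n (sval n p i) = skey n (sval n p' j) ↔ p.1 i = p'.1 j ∧ p.2 i = p'.2 j := by
  have := (p.1 i).isLt
  have := (p'.1 j).isLt
  rw [skey_sval, skey_sval, Fin.ext_iff]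
  cases p.2 i <;> cases p'.2 j <;> simp <;> omega

theorem sval_neg_iff (p : Equiv.Perm (Fin n) × (Fin n → Bool)) (i : Fin n) :
    sval n p i < 0 ↔ p.2 i = true := by
  unfold sval
  cases p.2 i <;> simp <;> omega

theorem sval_pos_iff (p : Equiv.Perm (Fin n) × (Fin n → Bool)) (i : Fin n) :
    0 < sval n p i ↔ p.2 i = false := by
  unfold sval
  cases p.2 i <;> simp

/-- The word `w(1) ⋯ w(n) 0` with each letter replaced by twice its rank in the order
`1 < ⋯ < n < -n < ⋯ < -1`; doubling leaves the odd value `2n + 1` free for the letter `0`. -/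
def key (p : Equiv.Perm (Fin n) × (Fin n → Bool)) : Fin (n + 1) → ℤ :=
  Fin.snoc (fun i => 2 * skey n (sval n p i)) (2 * n + 1)

theorem descCountC_eq_descentCount_key (p : Equiv.Perm (Fin n) × (Fin n → Bool)) :
    descCountC n p = Fin.descentCount (key p) := by
  unfold descCountC Fin.descentCount
  congr 1
  ext i
  simp only [mem_filter, mem_univ, true_and, key, Fin.snoc_castSucc]
  by_cases h : i.val + 1 < n
  · rw [dif_pos h, show i.succ = Fin.castSucc ⟨i + 1, h⟩ from rfl, Fin.snoc_castSucc]
    simp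
  · have := (p.1 i).isLt
    rw [dif_neg h, show i.succ = Fin.last n from Fin.ext (by simp; omega), Fin.snoc_last,
      skey_sval, decide_eq_true_iff, sval_neg_iff]
    cases p.2 i <;> simp <;> omega

theorem cdescCountC_eq_cyclicDescentCount_key (hn : 0 < n)
    (p : Equiv.Perm (Fin n) × (Fin n → Bool)) :
    cdescCountC n p = Fin.cyclicDescentCount (key p) := by
  have := (p.1 ⟨0, hn⟩).isLt
  rw [cdescCountC, Fin.cyclicDescentCount_eq_descentCount_add, descCountC_eq_descentCount_key,
    dif_pos hn, key, Fin.snoc_last, show (0 : Fin (n + 1)) = Fin.castSucc ⟨0, hn⟩ from rfl,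
    Fin.snoc_castSucc, skey_sval]
  congr 1
  cases h : p.2 ⟨0, hn⟩ <;> simp [sval_pos_iff, h]
  omega

theorem key_injective (p : Equiv.Perm (Fin n) × (Fin n → Bool)) : Injective (key p) := by
  refine Fin.snoc_injective_of_injective
    (fun i j hij => p.1.injective (skey_sval_eq_iff.1 (by simpa using hij)).1) ?_
  rintro ⟨i, hi⟩
  have := (p.1 i).isLt
  simp only [skey_sval] at hi
  split_ifs at hi <;> omega

theorem eq_of_key_eq {p p' : Equiv.Perm (Fin n) × (Fin n → Bool)} (h : key p = key p') :
    p = p' := by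
  have hi (i : Fin n) : p.1 i = p'.1 i ∧ p.2 i = p'.2 i :=
    skey_sval_eq_iff.1 (by simpa [key] using congrFun h i.castSucc)
  exact Prod.ext (Equiv.ext fun i => (hi i).1) (funext fun i => (hi i).2)

theorem range_key_eq {p p' : Equiv.Perm (Fin n) × (Fin n → Bool)}
    (h : p.2 ∘ p.1.symm = p'.2 ∘ p'.1.symm) : Set.range (key p) = Set.range (key p') := by
  rw [key, key, Fin.range_snoc, Fin.range_snoc,
    ← p.1.symm.surjective.range_comp fun i => 2 * skey n (sval n p i),
    ← p'.1.symm.surjective.range_comp fun i => 2 * skey n (sval n p' i)]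
  refine congrArg (insert _) (congrArg Set.range (funext fun j => ?_))
  have hj := congrFun h j
  simp only [comp_apply] at hj
  simp only [comp_apply, skey_sval, Equiv.apply_symm_apply, hj]

noncomputable def encode (p : Equiv.Perm (Fin (n + 1)) × (Fin (n + 1) → Bool)) :
    Equiv.Perm (Fin (n + 1)) × (Fin (n + 1) → Bool) :=
  (Fin.standardize (Fin.tail (Fin.rotateToMax (key p))), p.2 ∘ p.1.symm)

theorem encode_injective : Injective (encode (n := n)) := fun p p' h =>
  eq_of_key_eq <| Fin.eq_of_standardize_tail_rotateToMax_eq (key_injective p) (key_injective p')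
    (range_key_eq (congrArg Prod.snd h)) (by simp [key]) (congrArg Prod.fst h)

theorem encode_bijective : Bijective (encode (n := n)) :=
  (Fintype.bijective_iff_injective_and_card _).2 ⟨encode_injective, rfl⟩

theorem cdescCountC_eq_descCount_encode_add_one
    (p : Equiv.Perm (Fin (n + 1)) × (Fin (n + 1) → Bool)) :
    cdescCountC (n + 1) p = descCount (n + 1) (encode p).1 + 1 := by
  rw [cdescCountC_eq_cyclicDescentCount_key n.succ_pos,
    Fin.cyclicDescentCount_eq_descentCount_standardize_add_one (key_injective p)]
  rfl

end SignedPerm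

theorem cyclic_descents_hyperoctahedral_general (n r : ℕ) (hn : 0 < n) :
    Nat.card {p : Equiv.Perm (Fin n) × (Fin n → Bool) // cdescCountC n p = r + 1} =
      2 ^ n * Nat.card {w : Equiv.Perm (Fin n) // descCount n w = r} := by
  obtain ⟨n, rfl⟩ : ∃ m, n = m + 1 := ⟨n - 1, by omega⟩
  calc Nat.card {p : Equiv.Perm (Fin (n + 1)) × (Fin (n + 1) → Bool) //
          cdescCountC (n + 1) p = r + 1}
      = Nat.card {q : Equiv.Perm (Fin (n + 1)) × (Fin (n + 1) → Bool) //
          descCount (n + 1) q.1 = r} :=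
        Nat.card_congr <| (Equiv.ofBijective _ SignedPerm.encode_bijective).subtypeEquiv fun p => by
          simp [SignedPerm.cdescCountC_eq_descCount_encode_add_one]
    _ = Nat.card {w : Equiv.Perm (Fin (n + 1)) // descCount (n + 1) w = r} * 2 ^ (n + 1) := by
        rw [Nat.card_congr (Equiv.prodSubtypeFstEquivSubtypeProd
          (p := fun w => descCount (n + 1) w = r)), Nat.card_prod]
        simp
    _ = _ := mul_comm _ _

/-- The number of signed permutations in the hyperoctahedral group `C_n` with `r+1` cyclic
descents is `2^n` times the number of permutations in `S_n` with `r` descents. -/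
theorem cyclic_descents_hyperoctahedral (n r : ℕ) (hn : 0 < n) (hr : r ≤ n - 1) :
    Nat.card {p : Equiv.Perm (Fin n) × (Fin n → Bool) // cdescCountC n p = r + 1} =
      2 ^ n * Nat.card {w : Equiv.Perm (Fin n) // descCount n w = r} :=
  cyclic_descents_hyperoctahedral_general n r hn
end

section
/- Setting x_s = 1 for all shapes s in the cycle-index identity for unimodal permutations gives the formal power series identity 1/(1-u) = Π_{s} (2^{|s|} + u^{|s|})/(2^{|s|} - u^{|s|}), where the product is over all shapes s of transitive unimodal permutations. Equivalently, using the count of transitive unimodal permutations of size i, 1/(1-u) = Π_{i≥1} ((2^i + u^i)/(2^i - u^i))^{T(i)} where T(i) = (1/(2i)) Σ_{d|i, d odd} μ(d) 2^{i/d}. -/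
/-!
Taking logarithmic derivatives turns the product into a sum. Since
`X · d/dX log((2^i + X^i)/(2^i - X^i)) = 2i ∑_{k odd} (X/2)^{ik}`, the coefficient of `X^N`
in `X · P'/P` is `2^{1-N} ∑_{i ∣ N, N/i odd} i T(i)`, which is `1` by Möbius inversion
restricted to odd divisors (`χ * χμ = 1` for the indicator `χ` of the odd numbers). That is
also the coefficient of `X · g'/g` for `g = (1 - X)⁻¹`, and two power series with the same
constant term whose logarithmic derivatives agree below degree `n` agree up to degree `n`.
-/

open Finset PowerSeries
open scoped ArithmeticFunction.Moebius

namespace ArithmeticFunction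

variable {R : Type*} [Ring R]

variable (R) in
def oddIndicator : ArithmeticFunction R :=
  ⟨fun n => if Odd n then 1 else 0, by simp⟩

theorem oddIndicator_apply (n : ℕ) : oddIndicator R n = if Odd n then 1 else 0 := rfl

theorem oddIndicator_mul_pmul_moebius : oddIndicator R * (oddIndicator R).pmul μ = 1 := by
  ext n
  have hmul : ∀ x ∈ n.divisorsAntidiagonal,
      oddIndicator R x.1 * (oddIndicator R).pmul μ x.2 = oddIndicator R n * μ x.2 := by
    intro x hx
    rw [← (Nat.mem_divisorsAntidiagonal.mp hx).1, pmul_apply, ← mul_assoc]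
    simp only [oddIndicator_apply, Nat.odd_mul, ite_zero_mul_ite_zero, mul_one, intCoe_apply]
  have hsum : ∑ d ∈ n.divisors, (μ d : R) = (1 : ArithmeticFunction R) n := by
    rw [← coe_moebius_mul_coe_zeta, coe_mul_zeta_apply]
    simp only [intCoe_apply]
  rw [mul_apply, sum_congr rfl hmul, ← mul_sum,
    Nat.sum_divisorsAntidiagonal' fun _ d => (μ d : R), hsum, one_apply]
  split_ifs with h <;> simp [h, oddIndicator_apply]

theorem sum_divisors_filter_odd_div_sum_moebius (g : ℕ → R) {N : ℕ} (hN : N ≠ 0) :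
    ∑ i ∈ N.divisors with Odd (N / i), ∑ d ∈ i.divisors with Odd d, (μ d : R) * g (i / d) =
      g N := by
  let G : ArithmeticFunction R := ⟨fun n => if n = 0 then 0 else g n, rfl⟩
  calc _ = (oddIndicator R * ((oddIndicator R).pmul μ * G)) N := by
        rw [mul_apply, Nat.sum_divisorsAntidiagonal' fun a i =>
          oddIndicator R a * ((oddIndicator R).pmul μ * G) i, sum_filter]
        refine sum_congr rfl fun i _ => ?_
        rw [mul_apply, Nat.sum_divisorsAntidiagonal fun d e => (oddIndicator R).pmul μ d * G e,
          sum_filter, oddIndicator_apply, ite_mul, one_mul, zero_mul]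
        congr 1
        refine sum_congr rfl fun d hd => ?_
        have hid : i / d ≠ 0 :=
          (Nat.div_pos (Nat.divisor_le hd) (Nat.pos_of_mem_divisors hd)).ne'
        simp [G, hid, pmul_apply, oddIndicator_apply, intCoe_apply]
    _ = g N := by
      rw [← mul_assoc, oddIndicator_mul_pmul_moebius, one_mul]
      simp [G, hN]

end ArithmeticFunction

namespace PowerSeries

variable {K : Type*} [Field K]

theorem X_pow_succ_dvd_sub_constantCoeff [CharZero K] {f : K⟦X⟧} {n : ℕ}
    (h : X ^ (n + 1) ∣ X * d⁄dX K f) : X ^ (n + 1) ∣ f - C (constantCoeff f) := by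
  rw [X_pow_dvd_iff] at h ⊢
  rintro (_ | k) hk
  · simp
  · have := h (k + 1) hk
    rw [coeff_succ_X_mul, coeff_derivative] at this
    simpa [Nat.cast_add_one_ne_zero] using this

noncomputable def logDeriv (f : K⟦X⟧) : K⟦X⟧ := f⁻¹ * d⁄dX K f

variable {f g : K⟦X⟧}

theorem mul_logDeriv (hf : constantCoeff f ≠ 0) : f * logDeriv f = d⁄dX K f := by
  rw [logDeriv, ← mul_assoc, PowerSeries.mul_inv_cancel _ hf, one_mul]

theorem logDeriv_mul (hf : constantCoeff f ≠ 0) (hg : constantCoeff g ≠ 0) :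
    logDeriv (f * g) = logDeriv f + logDeriv g := by
  have hfg : constantCoeff (f * g) ≠ 0 := by simp [hf, hg]
  rw [← mul_right_inj' (a := f * g) fun h0 => hfg (by rw [h0, map_zero]),
    mul_logDeriv hfg, Derivation.leibniz, smul_eq_mul, smul_eq_mul, ← mul_logDeriv hf,
    ← mul_logDeriv hg]
  ring

theorem logDeriv_one : logDeriv (1 : K⟦X⟧) = 0 := by simp [logDeriv]

theorem logDeriv_inv (hf : constantCoeff f ≠ 0) : logDeriv f⁻¹ = -logDeriv f := by
  have hfi : constantCoeff f⁻¹ ≠ 0 := by simpa using hf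
  rw [eq_neg_iff_add_eq_zero, ← logDeriv_mul hfi hf, PowerSeries.inv_mul_cancel _ hf,
    logDeriv_one]

theorem logDeriv_pow (hf : constantCoeff f ≠ 0) (t : ℕ) :
    logDeriv (f ^ t) = t * logDeriv f := by
  induction t with
  | zero => simp [logDeriv_one]
  | succ t ih =>
    rw [pow_succ, logDeriv_mul (by simpa using pow_ne_zero t hf) hf, ih]
    push_cast; ring

theorem logDeriv_prod {ι : Type*} (s : Finset ι) (f : ι → K⟦X⟧)
    (hf : ∀ i ∈ s, constantCoeff (f i) ≠ 0) :
    logDeriv (∏ i ∈ s, f i) = ∑ i ∈ s, logDeriv (f i) := by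
  classical
  induction s using Finset.induction_on with
  | empty => simp [logDeriv_one]
  | insert a s ha ih =>
    rw [prod_insert ha, sum_insert ha, logDeriv_mul (hf a (mem_insert_self a s)),
      ih fun i hi => hf i (mem_insert_of_mem hi)]
    rw [map_prod]
    exact prod_ne_zero_iff.mpr fun i hi => hf i (mem_insert_of_mem hi)

theorem X_pow_succ_dvd_sub_of_logDeriv [CharZero K] {n : ℕ}
    (hfg : constantCoeff f = constantCoeff g) (hg : constantCoeff g ≠ 0)
    (h : X ^ (n + 1) ∣ X * (logDeriv f - logDeriv g)) : X ^ (n + 1) ∣ f - g := by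
  have hf : constantCoeff f ≠ 0 := hfg ▸ hg
  set q := f * g⁻¹
  have hq : constantCoeff q = 1 := by simp [q, hfg, hg]
  have hXq : X * d⁄dX K q = q * (X * (logDeriv f - logDeriv g)) := by
    rw [← mul_logDeriv (by simp [hq]), logDeriv_mul hf (by simpa using hg), logDeriv_inv hg]
    ring
  have := X_pow_succ_dvd_sub_constantCoeff (hXq ▸ h.mul_left q)
  rw [hq, map_one] at this
  have hfg' : f - g = (q - 1) * g := by
    rw [sub_mul, one_mul, mul_assoc, PowerSeries.inv_mul_cancel _ hg, mul_one]
  exact hfg' ▸ this.mul_right g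

theorem inv_C_sub_C_mul_X {c : K} (hc : c ≠ 0) (a : K) :
    (C c - C a * X)⁻¹ = mk fun k => a ^ k / c ^ (k + 1) := by
  rw [PowerSeries.inv_eq_iff_mul_eq_one (by simpa using hc)]
  ext (_ | k)
  · simp [hc]
  · rw [mul_sub, ← mul_assoc, mul_comm _ X, map_sub, coeff_mul_C, coeff_succ_X_mul,
      coeff_mul_C, coeff_mk, coeff_mk, coeff_one, if_neg k.succ_ne_zero]
    field_simp
    ring

theorem expand_inv (p : ℕ) (hp : p ≠ 0) {f : K⟦X⟧} (hf : constantCoeff f ≠ 0) :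
    expand p hp f⁻¹ = (expand p hp f)⁻¹ := by
  rw [eq_comm, PowerSeries.inv_eq_iff_mul_eq_one (by simpa using hf), ← map_mul,
    PowerSeries.inv_mul_cancel _ hf, map_one]

theorem coeff_X_mul_inv_add_inv {c : K} (hc : c ≠ 0) (q : ℕ) :
    coeff q (X * ((C c + X)⁻¹ + (C c - X)⁻¹)) = if Odd q then 2 / c ^ q else 0 := by
  have hplus : C c + X = C c - C (-1) * X := by simp
  have hminus : C c - X = C c - C 1 * X := by simp
  rcases q with _ | k
  · simp
  · rw [coeff_succ_X_mul, hplus, hminus, inv_C_sub_C_mul_X hc, inv_C_sub_C_mul_X hc, map_add,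
      coeff_mk, coeff_mk]
    rcases k.even_or_odd with hk | hk
    · simp [hk.neg_one_pow, hk.add_one]; ring
    · simp [hk.neg_one_pow, Nat.not_odd_iff_even.mpr hk.add_one]; ring

theorem constantCoeff_C_pow_add_X_pow_mul_inv {c : K} (hc : c ≠ 0) {i : ℕ} (hi : i ≠ 0) :
    constantCoeff ((C c ^ i + X ^ i) * (C c ^ i - X ^ i)⁻¹) = 1 := by
  simp [hc, hi]

theorem X_mul_logDeriv_C_add_X_pow_mul_inv {c : K} (hc : c ≠ 0) {i : ℕ} (hi : i ≠ 0) :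
    X * logDeriv ((C c + X ^ i) * (C c - X ^ i)⁻¹) =
      (i : K⟦X⟧) * expand i hi (X * ((C c + X)⁻¹ + (C c - X)⁻¹)) := by
  have hA : constantCoeff (C c + X ^ i) ≠ 0 := by simp [hc, hi]
  have hB : constantCoeff (C c - X ^ i) ≠ 0 := by simp [hc, hi]
  rw [logDeriv_mul hA (by simpa using hB), logDeriv_inv hB, logDeriv, logDeriv,
    map_mul (expand i hi), map_add (expand i hi), expand_X, expand_inv i hi (by simpa using hc),
    expand_inv i hi (by simpa using hc), map_add (expand i hi), map_sub (expand i hi), expand_C,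
    expand_X]
  obtain ⟨j, rfl⟩ := Nat.exists_eq_add_one_of_ne_zero hi
  simp only [map_add, map_sub, derivative_C, derivative_pow, derivative_X, Nat.add_sub_cancel]
  ring

theorem coeff_X_mul_logDeriv_C_pow_add_X_pow_mul_inv {c : K} (hc : c ≠ 0) {i : ℕ}
    (hi : i ≠ 0) (N : ℕ) :
    coeff N (X * logDeriv ((C c ^ i + X ^ i) * (C c ^ i - X ^ i)⁻¹)) =
      i * if i ∣ N ∧ Odd (N / i) then 2 / c ^ N else 0 := by
  rw [← map_pow, X_mul_logDeriv_C_add_X_pow_mul_inv (pow_ne_zero i hc) hi, ← map_natCast C,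
    coeff_C_mul, coeff_expand, coeff_X_mul_inv_add_inv (pow_ne_zero i hc)]
  by_cases hdvd : i ∣ N
  · simp only [hdvd, true_and, ↓reduceIte, ← pow_mul, Nat.mul_div_cancel' hdvd]
  · simp [hdvd]

theorem coeff_X_mul_logDeriv_prod {c : K} (hc : c ≠ 0) {s : Finset ℕ} (hs : 0 ∉ s)
    (t : ℕ → ℕ) (N : ℕ) :
    coeff N (X * logDeriv (∏ i ∈ s, ((C c ^ i + X ^ i) * (C c ^ i - X ^ i)⁻¹) ^ t i)) =
      ∑ i ∈ s, (t i : K) * (i * if i ∣ N ∧ Odd (N / i) then 2 / c ^ N else 0) := by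
  have hs0 : ∀ i ∈ s, i ≠ 0 := fun i hi h0 => hs (h0 ▸ hi)
  have hfactor : ∀ i ∈ s, constantCoeff ((C c ^ i + X ^ i) * (C c ^ i - X ^ i)⁻¹) ≠ 0 :=
    fun i hi => by simp [constantCoeff_C_pow_add_X_pow_mul_inv hc (hs0 i hi)]
  rw [logDeriv_prod _ _ fun i hi => by simpa using pow_ne_zero (t i) (hfactor i hi), mul_sum,
    map_sum]
  refine sum_congr rfl fun i hi => ?_
  rw [logDeriv_pow (hfactor i hi), mul_left_comm, ← map_natCast C, coeff_C_mul,
    coeff_X_mul_logDeriv_C_pow_add_X_pow_mul_inv hc (hs0 i hi)]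

theorem coeff_succ_X_mul_logDeriv_inv_one_sub_X (N : ℕ) :
    coeff (N + 1) (X * logDeriv (1 - X : K⟦X⟧)⁻¹) = 1 := by
  have h1X : (1 - X : K⟦X⟧) = C 1 - C 1 * X := by simp
  rw [logDeriv_inv (by simp), logDeriv, coeff_succ_X_mul, h1X, inv_C_sub_C_mul_X one_ne_zero]
  simp

end PowerSeries

theorem sum_Icc_natCast_mul_ite_dvd_odd_eq_one (T : ℕ → ℕ)
    (hT : ∀ i, 1 ≤ i → (T i : ℚ) * (2 * i) =
      ∑ d ∈ i.divisors.filter (fun d => Odd d), (μ d : ℚ) * 2 ^ (i / d))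
    {n N : ℕ} (hN : N ≠ 0) (hNn : N ≤ n) :
    ∑ i ∈ Icc 1 n, (T i : ℚ) * (i * if i ∣ N ∧ Odd (N / i) then 2 / 2 ^ N else 0) =
      1 := by
  have hsub : N.divisors ⊆ Icc 1 n := fun i hi =>
    mem_Icc.mpr ⟨Nat.pos_of_mem_divisors hi, (Nat.divisor_le hi).trans hNn⟩
  rw [← sum_subset hsub fun i _ hi => by simp_all [Nat.mem_divisors]]
  calc _ = (∑ i ∈ N.divisors with Odd (N / i), (T i : ℚ) * (2 * i)) / 2 ^ N := by
        rw [sum_div, sum_filter]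
        refine sum_congr rfl fun i hi => ?_
        simp only [Nat.dvd_of_mem_divisors hi, true_and]
        split_ifs <;> ring
    _ = (∑ i ∈ N.divisors with Odd (N / i), ∑ d ∈ i.divisors with Odd d,
          (μ d : ℚ) * 2 ^ (i / d)) / 2 ^ N := by
        rw [sum_congr rfl fun i hi => hT i (Nat.pos_of_mem_divisors (mem_filter.mp hi).1)]
    _ = 1 := by
        rw [ArithmeticFunction.sum_divisors_filter_odd_div_sum_moebius (fun k => (2 : ℚ) ^ k)
          hN, div_self (by positivity)]

/-- Factors with `i > n` do not affect the coefficient of `u^n`, so the product is truncated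
at `n`. -/
theorem unimodal_product_identity (T : ℕ → ℕ)
    (hT : ∀ i, 1 ≤ i → (T i : ℚ) * (2 * i) =
      ∑ d ∈ i.divisors.filter (fun d => Odd d),
        (ArithmeticFunction.moebius d : ℚ) * 2 ^ (i / d)) (n : ℕ) :
    PowerSeries.coeff (R := ℚ) n
        (∏ i ∈ Finset.Icc 1 n,
          (((2 : PowerSeries ℚ) ^ i + (PowerSeries.X : PowerSeries ℚ) ^ i) *
            ((2 : PowerSeries ℚ) ^ i - (PowerSeries.X : PowerSeries ℚ) ^ i)⁻¹) ^ (T i)) =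
      PowerSeries.coeff (R := ℚ) n ((1 - PowerSeries.X : PowerSeries ℚ)⁻¹) := by
  rw [show (2 : ℚ⟦X⟧) = C 2 from (map_ofNat C 2).symm]
  set P := ∏ i ∈ Icc 1 n, ((C (2 : ℚ) ^ i + X ^ i) * (C (2 : ℚ) ^ i - X ^ i)⁻¹) ^ T i
  have hP : constantCoeff P = 1 := by
    rw [map_prod]
    refine prod_eq_one fun i hi => ?_
    rw [map_pow, constantCoeff_C_pow_add_X_pow_mul_inv two_ne_zero
      (Nat.one_le_iff_ne_zero.mp (mem_Icc.mp hi).1), one_pow]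
  have hlog : X ^ (n + 1) ∣
      X * (PowerSeries.logDeriv P - PowerSeries.logDeriv (1 - X : ℚ⟦X⟧)⁻¹) := by
    rw [X_pow_dvd_iff]
    rintro (_ | N) hN
    · simp
    rw [mul_sub, map_sub, sub_eq_zero, coeff_succ_X_mul_logDeriv_inv_one_sub_X,
      coeff_X_mul_logDeriv_prod two_ne_zero (by simp),
      sum_Icc_natCast_mul_ite_dvd_odd_eq_one T hT N.succ_ne_zero (Nat.lt_succ_iff.mp hN)]
  have := X_pow_succ_dvd_sub_of_logDeriv (hP.trans (by simp)) (by simp) hlog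
  rw [← sub_eq_zero, ← map_sub]
  exact X_pow_dvd_iff.mp this n n.lt_succ_self
end

section
/- Let q = 2. There is a cycle-type-preserving 2-to-1 map from the set of pairs (cut position with interleaving) arising as inverse type-C_n 2-shuffles onto the set of unimodal permutations of {1,...,n}; consequently, for each partition λ of n, the number of unimodal permutations of n whose cycle type is λ equals 2^{-1} times the number of type-C_n 2-shuffle outcomes whose underlying (unsigned) cycle type is λ. -/
open Finset

/-- A signed permutation (modeled as a permutation of `Fin n` with a sign vector) is an
inverse type-`C_n` 2-shuffle outcome: for some cut position `j`, the negative values are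
exactly `-j,…,-1` (i.e. those of magnitude `≤ j`), and the negative values appear in
increasing order `-j, -(j-1), …, -1` (magnitudes decreasing) while the positive values
`j+1,…,n` appear in increasing order. -/
def ShuffleOutcome (n : ℕ) (p : Equiv.Perm (Fin n) × (Fin n → Bool)) : Prop :=
  ∃ j ≤ n, (∀ i, p.2 i = true ↔ (p.1 i : ℕ) + 1 ≤ j) ∧
    (∀ i1 i2 : Fin n, i1 < i2 → p.2 i1 = true → p.2 i2 = true → p.1 i2 < p.1 i1) ∧
    (∀ i1 i2 : Fin n, i1 < i2 → p.2 i1 = false → p.2 i2 = false → p.1 i1 < p.1 i2)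

/-! Write `v = w⁻¹`. With cut `j`, the shuffle conditions say that `v` decreases on the values
`< j` (the flipped packet) and increases on the values `≥ j`, and the signs are read off from
`w` and `j`. Conjugating by the reversal `i ↦ n - 1 - i` turns this V shape into
`u = rev ∘ v ∘ rev`, which increases on the positions `< n - j` and decreases from `n - j` on.
A unimodal `u` with its maximum at position `i` splits in this way exactly at `i` and at `i + 1`,
so it has exactly two preimages; and `u`, being conjugate to `w⁻¹`, has the cycle type of `w`. -/

open Function

namespace Equiv

variable {α β : Type*} [LinearOrder α] [LinearOrder β]

theorem strictMonoOn_symm_iff (e : α ≃ β) (s : Set β) :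
    StrictMonoOn e.symm s ↔ StrictMonoOn e (e ⁻¹' s) :=
  ⟨fun h a ha b hb hab => (h.lt_iff_lt ha hb).mp (by simpa using hab),
    fun h x hx y hy hxy => (h.lt_iff_lt (by simpa using hx) (by simpa using hy)).mp
      (by simpa using hxy)⟩

theorem strictAntiOn_symm_iff (e : α ≃ β) (s : Set β) :
    StrictAntiOn e.symm s ↔ StrictAntiOn e (e ⁻¹' s) :=
  ⟨fun h a ha b hb hab => (h.lt_iff_gt ha hb).mp (by simpa using hab),
    fun h x hx y hy hxy => (h.lt_iff_gt (by simpa using hx) (by simpa using hy)).mp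
      (by simpa using hxy)⟩

end Equiv

namespace Fin

variable {n m : ℕ} {f : Fin n → Fin m} {s : Set (Fin n)}

theorem strictMonoOn_rev_comp_comp_rev_iff :
    StrictMonoOn (rev ∘ f ∘ rev) (rev ⁻¹' s) ↔ StrictMonoOn f s := by
  refine ⟨fun h x hx y hy hxy => ?_, fun h a ha b hb hab => ?_⟩
  · simpa using h (a := rev y) (by simpa) (b := rev x) (by simpa) (rev_lt_rev.mpr hxy)
  · simpa using h hb ha (rev_lt_rev.mpr hab)

theorem strictAntiOn_rev_comp_comp_rev_iff :
    StrictAntiOn (rev ∘ f ∘ rev) (rev ⁻¹' s) ↔ StrictAntiOn f s := by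
  refine ⟨fun h x hx y hy hxy => ?_, fun h a ha b hb hab => ?_⟩
  · simpa using h (a := rev y) (by simpa) (b := rev x) (by simpa) (rev_lt_rev.mpr hxy)
  · simpa using h hb ha (rev_lt_rev.mpr hab)

end Fin

theorem Nat.card_subtype_comp_of_card_fiber {α β : Type*} [Finite α] [Finite β] (f : α → β)
    {m : ℕ} (hf : ∀ b, Nat.card {a // f a = b} = m) (q : β → Prop) :
    Nat.card {a // q (f a)} = m * Nat.card {b // q b} := by
  have := Fintype.ofFinite {b // q b}
  rw [← Nat.card_congr (Equiv.sigmaSubtypeFiberEquivSubtype f fun _ => Iff.rfl), Nat.card_sigma]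
  simp [hf, Nat.card_eq_fintype_card, mul_comm]

section UnimodalAt

variable {n : ℕ} {α : Type*} [LinearOrder α] {u : Fin n → α} {i : Fin n} {k : ℕ}

def UnimodalAt (u : Fin n → α) (i : Fin n) : Prop :=
  StrictMonoOn u (Set.Iic i) ∧ StrictAntiOn u (Set.Ici i)

def UpDownAt (u : Fin n → α) (k : ℕ) : Prop :=
  StrictMonoOn u {a | (a : ℕ) < k} ∧ StrictAntiOn u {a | k ≤ (a : ℕ)}

theorem unimodal_iff_exists_unimodalAt {u : Equiv.Perm (Fin n)} :
    Unimodal u ↔ ∃ i, UnimodalAt u i :=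
  exists_congr fun _ => and_congr
    ⟨fun h _ _ _ hb hab => h _ _ hab hb, fun h _ _ hab hb => h (hab.le.trans hb) hb hab⟩
    ⟨fun h _ ha _ _ hab => h _ _ ha hab, fun h _ _ ha hab => h ha (ha.trans hab.le) hab⟩

theorem UnimodalAt.apply_le (h : UnimodalAt u i) (a : Fin n) : u a ≤ u i := by
  rcases le_total a i with ha | ha
  · exact h.1.monotoneOn ha Set.self_mem_Iic ha
  · exact h.2.antitoneOn Set.self_mem_Ici ha ha

theorem UpDownAt.eq_or_eq_succ (h : UpDownAt u k) (hk : k ≤ n) (hmax : ∀ a, u a ≤ u i) :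
    k = i ∨ k = i + 1 := by
  by_contra! hne
  obtain hki | hik : k < i ∨ (i : ℕ) + 1 < k := by omega
  · exact (hmax ⟨i - 1, by omega⟩).not_gt <|
      h.2 (show k ≤ (i : ℕ) - 1 by omega) hki.le (show (i : ℕ) - 1 < i by omega)
  · exact (hmax ⟨i + 1, by omega⟩).not_gt <|
      h.1 (show (i : ℕ) < k by omega) (show (i : ℕ) + 1 < k from hik) (Nat.lt_succ_self _)

theorem UnimodalAt.upDownAt_iff (h : UnimodalAt u i) (hk : k ≤ n) :
    UpDownAt u k ↔ k = i ∨ k = i + 1 := by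
  refine ⟨fun hud => hud.eq_or_eq_succ hk h.apply_le, ?_⟩
  rintro (rfl | rfl)
  · exact ⟨h.1.mono fun a ha => Nat.le_of_lt ha, h.2⟩
  · exact ⟨h.1.mono fun a ha => Nat.le_of_lt_succ ha,
      h.2.mono fun a ha => Nat.le_of_succ_le ha⟩

theorem UpDownAt.exists_unimodalAt (h : UpDownAt u k) (hk : k ≤ n) (hu : Injective u)
    (hn : 0 < n) : ∃ i, UnimodalAt u i := by
  have : Nonempty (Fin n) := ⟨⟨0, hn⟩⟩
  obtain ⟨i, hmax⟩ := Finite.exists_max u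
  have hlt : ∀ a, a ≠ i → u a < u i := fun a ha => (hmax a).lt_of_ne (hu.ne ha)
  refine ⟨i, ?_⟩
  rcases h.eq_or_eq_succ hk hmax with rfl | rfl
  · refine ⟨fun a _ b hb hab => ?_, h.2⟩
    obtain hb | rfl := Set.mem_Iic.mp hb |>.lt_or_eq
    · exact h.1 (hab.trans hb) hb hab
    · exact hlt a hab.ne
  · refine ⟨h.1.mono fun a ha => Nat.lt_succ_of_le ha, fun a ha b _ hab => ?_⟩
    obtain ha | rfl := Set.mem_Ici.mp ha |>.lt_or_eq
    · exact h.2 ha (ha.trans hab) hab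
    · exact hlt b hab.ne'

end UnimodalAt

namespace Equiv.Perm

variable {n : ℕ}

def revConjInv (w : Perm (Fin n)) : Perm (Fin n) := Fin.revPerm * w⁻¹ * Fin.revPerm

theorem coe_revConjInv (w : Perm (Fin n)) : ⇑(revConjInv w) = Fin.rev ∘ w.symm ∘ Fin.rev :=
  rfl

theorem revConjInv_involutive : Involutive (revConjInv (n := n)) := fun w => by
  ext a; simp [revConjInv]

theorem cycleType_revConjInv (w : Perm (Fin n)) : (revConjInv w).cycleType = w.cycleType := by
  change (Fin.revPerm * w⁻¹ * Fin.revPerm⁻¹).cycleType = _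
  rw [cycleType_conj, cycleType_inv]

theorem upDownAt_revConjInv_iff (w : Perm (Fin n)) (j : ℕ) :
    UpDownAt (revConjInv w) (n - j) ↔
      StrictAntiOn w (w ⁻¹' {x | (x : ℕ) < j}) ∧
        StrictMonoOn w (w ⁻¹' {x | j ≤ (x : ℕ)}) := by
  have h₁ : {a : Fin n | (a : ℕ) < n - j} = Fin.rev ⁻¹' {x | j ≤ (x : ℕ)} := by
    ext a; simp only [Set.mem_ofPred_eq, Set.mem_preimage, Fin.val_rev]; omega
  have h₂ : {a : Fin n | n - j ≤ (a : ℕ)} = Fin.rev ⁻¹' {x | (x : ℕ) < j} := by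
    ext a; simp only [Set.mem_ofPred_eq, Set.mem_preimage, Fin.val_rev]; omega
  rw [UpDownAt, coe_revConjInv, h₁, h₂, Fin.strictMonoOn_rev_comp_comp_rev_iff,
    Fin.strictAntiOn_rev_comp_comp_rev_iff, strictMonoOn_symm_iff, strictAntiOn_symm_iff, and_comm]

def cutSigns (w : Perm (Fin n)) (j : ℕ) : Fin n → Bool := fun i => decide ((w i : ℕ) < j)

theorem shuffleOutcome_iff {w : Perm (Fin n)} {ε : Fin n → Bool} :
    ShuffleOutcome n (w, ε) ↔
      ∃ j ≤ n, ε = cutSigns w j ∧ UpDownAt (revConjInv w) (n - j) := by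
  refine exists_congr fun j => and_congr_right fun _ => ?_
  have hsigns : (∀ i, ε i = true ↔ (w i : ℕ) + 1 ≤ j) ↔ ε = cutSigns w j := by
    simp only [_root_.funext_iff, cutSigns, Nat.add_one_le_iff]
    exact forall_congr' fun i => by cases ε i <;> simp
  rw [hsigns, upDownAt_revConjInv_iff]
  refine and_congr_right fun hε => ?_
  subst hε
  simp only [StrictMonoOn, StrictAntiOn, cutSigns, Set.mem_preimage, Set.mem_ofPred_eq,
    decide_eq_true_iff, decide_eq_false_iff_not, not_lt]
  tauto

theorem unimodal_revConjInv {w : Perm (Fin n)} {ε : Fin n → Bool} (hn : 0 < n)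
    (h : ShuffleOutcome n (w, ε)) : Unimodal (revConjInv w) := by
  obtain ⟨j, -, -, hud⟩ := shuffleOutcome_iff.mp h
  exact unimodal_iff_exists_unimodalAt.mpr
    (hud.exists_unimodalAt (Nat.sub_le n j) (revConjInv w).injective hn)

theorem shuffleOutcome_and_revConjInv_eq_iff {u : Perm (Fin n)} {i : Fin n} (hu : UnimodalAt u i)
    {p : Perm (Fin n) × (Fin n → Bool)} :
    ShuffleOutcome n p ∧ revConjInv p.1 = u ↔
      p = (revConjInv u, cutSigns (revConjInv u) (n - i)) ∨
        p = (revConjInv u, cutSigns (revConjInv u) (n - 1 - i)) := by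
  obtain ⟨w, ε⟩ := p
  have hi := i.isLt
  rw [shuffleOutcome_iff, revConjInv_involutive.eq_iff, Prod.mk.injEq, Prod.mk.injEq]
  constructor
  · rintro ⟨⟨j, hj, rfl, hud⟩, rfl⟩
    rw [revConjInv_involutive] at hud
    rcases (hu.upDownAt_iff (Nat.sub_le n j)).mp hud with h | h
    · exact Or.inl ⟨rfl, by congr 1; omega⟩
    · exact Or.inr ⟨rfl, by congr 1; omega⟩
  · rintro (⟨rfl, rfl⟩ | ⟨rfl, rfl⟩) <;> refine ⟨⟨_, by omega, rfl, ?_⟩, rfl⟩ <;>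
      rw [revConjInv_involutive, hu.upDownAt_iff (Nat.sub_le _ _)] <;> omega

theorem card_shuffleOutcome_revConjInv_eq {u : Perm (Fin n)} (hu : Unimodal u) :
    Nat.card {p // ShuffleOutcome n p ∧ revConjInv p.1 = u} = 2 := by
  obtain ⟨i, hi⟩ := unimodal_iff_exists_unimodalAt.mp hu
  set w := revConjInv u
  have hne : cutSigns w (n - i) ≠ cutSigns w (n - 1 - i) := fun h => by
    have := congrFun h (w.symm ⟨n - 1 - i, by omega⟩)
    simp [cutSigns] at this
    omega
  rw [← Set.ncard_pair (Prod.mk_right_injective w |>.ne hne), ← Nat.card_coe_set_eq]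
  exact Nat.card_congr (Equiv.subtypeEquivRight fun p => shuffleOutcome_and_revConjInv_eq_iff hi)

end Equiv.Perm

open Equiv.Perm

/-- There is a cycle-type-preserving 2-to-1 map from type-`C_n` 2-shuffle outcomes onto
unimodal permutations of `{1,…,n}`; consequently, for each cycle type `μ`, the number of
shuffle outcomes with underlying (unsigned) cycle type `μ` is twice the number of unimodal
permutations with cycle type `μ`. -/
theorem shuffle_outcomes_unimodal (n : ℕ) (hn : 0 < n) :
    (∃ η : {p : Equiv.Perm (Fin n) × (Fin n → Bool) // ShuffleOutcome n p} →
        {u : Equiv.Perm (Fin n) // Unimodal u},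
      (∀ p, (p.val.1).cycleType = (η p).val.cycleType) ∧
      (∀ u, Nat.card {p // η p = u} = 2)) ∧
    ∀ μ : Multiset ℕ,
      Nat.card {p : Equiv.Perm (Fin n) × (Fin n → Bool) //
          ShuffleOutcome n p ∧ (p.1).cycleType = μ} =
        2 * Nat.card {u : Equiv.Perm (Fin n) // Unimodal u ∧ u.cycleType = μ} := by
  let η : {p // ShuffleOutcome n p} → {u : Equiv.Perm (Fin n) // Unimodal u} :=
    fun p => ⟨revConjInv p.1.1, unimodal_revConjInv hn p.2⟩
  have hη : ∀ u, Nat.card {p // η p = u} = 2 := fun u => by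
    rw [← card_shuffleOutcome_revConjInv_eq u.2]
    exact Nat.card_congr <| (Equiv.subtypeEquivRight fun p => Subtype.ext_iff).trans
      (Equiv.subtypeSubtypeEquivSubtypeInter _ fun p : Equiv.Perm (Fin n) × _ =>
        revConjInv p.1 = u.1)
  refine ⟨⟨η, fun p => (cycleType_revConjInv _).symm, hη⟩, fun μ => ?_⟩
  calc Nat.card {p // ShuffleOutcome n p ∧ p.1.cycleType = μ}
      = Nat.card {p // (η p).1.cycleType = μ} := by
        refine Nat.card_congr <| (Equiv.subtypeSubtypeEquivSubtypeInter _ _).symm.trans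
          (Equiv.subtypeEquivRight fun p => ?_)
        rw [cycleType_revConjInv]
    _ = 2 * Nat.card {u : {u : Equiv.Perm (Fin n) // Unimodal u} // u.1.cycleType = μ} :=
        Nat.card_subtype_comp_of_card_fiber η hη fun u => u.1.cycleType = μ
    _ = 2 * Nat.card {u : Equiv.Perm (Fin n) // Unimodal u ∧ u.cycleType = μ} := by
        rw [Nat.card_congr
          (Equiv.subtypeSubtypeEquivSubtypeInter Unimodal fun u => u.cycleType = μ)]
end

section
/- Let q be even with e=1. The total variation distance of the type-C_n probability measure Q(w) = (1/q^n)·binom(q/2 + n - cd(w), n) (where cd(w) is the number of cyclic descents of the signed permutation w) to the uniform measure on C_n equals the total variation distance of the Bayer–Diaconis q/2-riffle-shuffle measure P_{q/2}(w) = ((q/2)^{-n})·binom(q/2+n-d(w)-1, n) on S_n to the uniform measure on S_n. -/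
open Finset

/-!
Place a sentinel `0` between `n` and `-n` in the order `1 < ⋯ < n < -n < ⋯ < -1` and append it
to the word `w(1) ⋯ w(n)`: the cyclic descents of `w` are then exactly the cyclic descents of this
circular word of length `n + 1`. Cutting the circle just after its maximum leaves a linear word
with one descent fewer; its standardization `σ ∈ S_n`, together with the sign carried by each
value, determines `w`, because the position of the sentinel in the cut word fixes the rotation.
So `w ↦ (σ, signs)` is a bijection `C_n → S_n × {±1}ⁿ` with `cd(w) = d(σ) + 1`, and since
`q ^ n = 2 ^ n (q / 2) ^ n` the two total variation sums agree term by term.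
-/
open Function

section Words

variable {α : Type*} [LinearOrder α] {m : ℕ}

def descentCount (f : Fin (m + 1) → α) : ℕ := #{i : Fin m | f i.succ < f i.castSucc}

def cyclicDescentCount (f : Fin (m + 1) → α) : ℕ := #{i | f (i + 1) < f i}

lemma descentCount_comp_strictMono {β : Type*} [LinearOrder β] {F : α → β} (hF : StrictMono F)
    (f : Fin (m + 1) → α) : descentCount (F ∘ f) = descentCount f := by
  simp only [descentCount, comp_apply, hF.lt_iff_lt]

lemma cyclicDescentCount_comp_add_right (f : Fin (m + 1) → α) (a : Fin (m + 1)) :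
    cyclicDescentCount (fun i => f (i + a)) = cyclicDescentCount f :=
  card_equiv (Equiv.addRight a) fun i => by simp [add_right_comm]

lemma cyclicDescentCount_eq_descentCount_init_add_one {f : Fin (m + 1 + 1) → α}
    (hf : ∀ i, i ≠ Fin.last _ → f i < f (Fin.last _)) :
    cyclicDescentCount f = descentCount (Fin.init f) + 1 := by
  have hlast : f (Fin.last _ + 1) < f (Fin.last _) := by
    rw [Fin.last_add_one]; exact hf 0 (Fin.last_pos).ne
  have hpenult : ¬ f (Fin.last _) < f (Fin.last m).castSucc :=
    (hf _ (Fin.castSucc_lt_last _).ne).not_gt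
  rw [cyclicDescentCount, descentCount, card_filter, card_filter]
  simp only [Fin.sum_univ_castSucc, hlast, Fin.coeSucc_eq_succ, Fin.succ_last, hpenult, Fin.init,
    Fin.succ_castSucc, if_true, if_false, add_zero]
  rfl

end Words

section Standardize

variable {α : Type*} [LinearOrder α] {n : ℕ}

def standardize (f : Fin n → α) : Equiv.Perm (Fin n) := (Tuple.sort f)⁻¹

lemma strictMono_comp_sort {f : Fin n → α} (hf : Injective f) : StrictMono (f ∘ Tuple.sort f) :=
  (Tuple.monotone_sort f).strictMono_of_injective (hf.comp (Tuple.sort f).injective)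

lemma comp_sort_comp_standardize (f : Fin n → α) : f ∘ Tuple.sort f ∘ standardize f = f := by
  ext i; simp [standardize]

lemma descentCount_standardize {m : ℕ} {f : Fin (m + 1) → α} (hf : Injective f) :
    descentCount ⇑(standardize f) = descentCount f := by
  conv_rhs => rw [← comp_sort_comp_standardize f]
  exact (descentCount_comp_strictMono (strictMono_comp_sort hf) _).symm

lemma eq_of_standardize_eq {f g : Fin n → α} (hf : Injective f) (hg : Injective g)
    (hrange : Set.range f = Set.range g) (h : standardize f = standardize g) : f = g := by
  have hsorted : f ∘ Tuple.sort f = g ∘ Tuple.sort g := by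
    rw [← (strictMono_comp_sort hf).range_inj (strictMono_comp_sort hg),
      (Tuple.sort f).surjective.range_comp, (Tuple.sort g).surjective.range_comp, hrange]
  rw [← comp_sort_comp_standardize f, ← comp_sort_comp_standardize g, ← comp_assoc, hsorted, h,
    comp_assoc]

end Standardize

lemma eq_of_comp_add_right_eq {G β : Type*} [AddCommGroup G] {f g : G → β} (hg : Injective g)
    {a b x : G} (h : ∀ i, f (i + a) = g (i + b)) (hx : f x = g x) : f = g := by
  obtain rfl : a = b := by
    have hxab : g (x - a + b) = g x := by rw [← hx, ← h, sub_add_cancel]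
    have := hg hxab
    rwa [sub_add_eq_add_sub, sub_eq_iff_eq_add, add_right_inj, eq_comm] at this
  funext i
  simpa using h (i - a)

lemma Fin.range_init_of_injective {β : Type*} {k : ℕ} {r : Fin (k + 1) → β} (hr : Injective r) :
    Set.range (Fin.init r) = Set.range r \ {r (Fin.last k)} := by
  have hsnoc := Fin.snoc_init_self r
  rw [← hsnoc, Fin.snoc_injective_iff] at hr
  calc Set.range (Fin.init r)
      = insert (r (Fin.last k)) (Set.range (Fin.init r)) \ {r (Fin.last k)} :=
        (Set.insert_sdiff_self_of_notMem hr.2).symm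
    _ = Set.range r \ {r (Fin.last k)} := by rw [← Fin.range_snoc, hsnoc]

section CutAtMax

variable {α : Type*} [LinearOrder α] {m : ℕ}

noncomputable def maxPos (f : Fin (m + 1) → α) : Fin (m + 1) := (Finite.exists_max f).choose

lemma le_apply_maxPos (f : Fin (m + 1) → α) (i : Fin (m + 1)) : f i ≤ f (maxPos f) :=
  (Finite.exists_max f).choose_spec i

lemma apply_maxPos_eq_of_range_eq {f g : Fin (m + 1) → α} (h : Set.range f = Set.range g) :
    f (maxPos f) = g (maxPos g) := by
  obtain ⟨i, hi⟩ : f (maxPos f) ∈ Set.range g := h ▸ Set.mem_range_self _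
  obtain ⟨j, hj⟩ : g (maxPos g) ∈ Set.range f := h ▸ Set.mem_range_self _
  exact le_antisymm (hi ▸ le_apply_maxPos g i) (hj ▸ le_apply_maxPos f j)

noncomputable def rotateAfterMax (f : Fin (m + 1) → α) (i : Fin (m + 1)) : α :=
  f (i + (maxPos f + 1))

lemma rotateAfterMax_injective {f : Fin (m + 1) → α} (hf : Injective f) :
    Injective (rotateAfterMax f) :=
  hf.comp (add_left_injective _)

lemma rotateAfterMax_last (f : Fin (m + 1) → α) :
    rotateAfterMax f (Fin.last m) = f (maxPos f) := by
  rw [rotateAfterMax, add_left_comm, Fin.last_add_one, add_zero]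

lemma range_rotateAfterMax (f : Fin (m + 1) → α) : Set.range (rotateAfterMax f) = Set.range f :=
  (Equiv.addRight (maxPos f + 1)).surjective.range_comp f

lemma rotateAfterMax_lt_last {f : Fin (m + 1) → α} (hf : Injective f) {i : Fin (m + 1)}
    (hi : i ≠ Fin.last m) : rotateAfterMax f i < rotateAfterMax f (Fin.last m) :=
  (le_apply_maxPos f _).trans_eq (rotateAfterMax_last f).symm |>.lt_of_ne
    ((rotateAfterMax_injective hf).ne hi)

noncomputable def cutAtMax (f : Fin (m + 1 + 1) → α) : Fin (m + 1) → α :=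
  Fin.init (rotateAfterMax f)

variable {f g : Fin (m + 1 + 1) → α}

lemma cutAtMax_injective (hf : Injective f) : Injective (cutAtMax f) :=
  (rotateAfterMax_injective hf).comp (Fin.castSucc_injective _)

lemma cyclicDescentCount_eq_descentCount_cutAtMax_add_one (hf : Injective f) :
    cyclicDescentCount f = descentCount (cutAtMax f) + 1 := by
  rw [← cyclicDescentCount_comp_add_right f (maxPos f + 1)]
  exact cyclicDescentCount_eq_descentCount_init_add_one fun i => rotateAfterMax_lt_last hf

lemma range_cutAtMax (hf : Injective f) :
    Set.range (cutAtMax f) = Set.range f \ {f (maxPos f)} := by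
  rw [cutAtMax, Fin.range_init_of_injective (rotateAfterMax_injective hf), range_rotateAfterMax,
    rotateAfterMax_last]

lemma eq_of_cutAtMax_eq (hg : Injective g) (hrange : Set.range f = Set.range g)
    (hlast : f (Fin.last _) = g (Fin.last _)) (h : cutAtMax f = cutAtMax g) : f = g := by
  have hrot : rotateAfterMax f = rotateAfterMax g := by
    rw [← Fin.snoc_init_self (rotateAfterMax f), ← Fin.snoc_init_self (rotateAfterMax g)]
    exact congrArg₂ Fin.snoc h (by
      rw [rotateAfterMax_last, rotateAfterMax_last, apply_maxPos_eq_of_range_eq hrange])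
  exact eq_of_comp_add_right_eq hg (congrFun hrot) hlast

lemma eq_of_standardize_cutAtMax_eq (hf : Injective f) (hg : Injective g)
    (hrange : Set.range f = Set.range g) (hlast : f (Fin.last _) = g (Fin.last _))
    (h : standardize (cutAtMax f) = standardize (cutAtMax g)) : f = g := by
  refine eq_of_cutAtMax_eq hg hrange hlast
    (eq_of_standardize_eq (cutAtMax_injective hf) (cutAtMax_injective hg) ?_ h)
  rw [range_cutAtMax hf, range_cutAtMax hg, hrange, apply_maxPos_eq_of_range_eq hrange]

end CutAtMax

section SignedPerm

variable {n : ℕ}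

/-- Twice the rank of `±(v + 1)` in `1 < ⋯ < n < -n < ⋯ < -1` (negative iff `b`); doubling
leaves the odd value `2n + 1` free for the sentinel. -/
def valKey (n : ℕ) (v : Fin n) (b : Bool) : ℤ := if b then 2 * (2 * n - v) else 2 * (v + 1)

lemma valKey_injective : Injective fun x : Fin n × Bool => valKey n x.1 x.2 := by
  rintro ⟨v, b⟩ ⟨v', b'⟩ h
  have := v.isLt; have := v'.isLt
  cases b <;> cases b' <;> simp only [valKey, Bool.false_eq_true, if_true, if_false] at h <;>
    first | omega | simp only [Prod.mk.injEq, and_true]; omega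

lemma valKey_eq_two_mul_skey (p : Equiv.Perm (Fin n) × (Fin n → Bool)) (i : Fin n) :
    valKey n (p.1 i) (p.2 i) = 2 * skey n (sval n p i) := by
  unfold valKey skey sval
  cases p.2 i <;> simp only [Bool.false_eq_true, if_true, if_false] <;> split_ifs <;> omega

def circWord (n : ℕ) (p : Equiv.Perm (Fin n) × (Fin n → Bool)) : Fin (n + 1) → ℤ :=
  Fin.snoc (fun i => valKey n (p.1 i) (p.2 i)) (2 * n + 1)

def signByValue (p : Equiv.Perm (Fin n) × (Fin n → Bool)) (v : Fin n) : Bool := p.2 (p.1.symm v)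

lemma circWord_injective (p : Equiv.Perm (Fin n) × (Fin n → Bool)) :
    Injective (circWord n p) := by
  refine Fin.snoc_injective_of_injective (fun i j h => p.1.injective
    (congrArg Prod.fst (@valKey_injective n (p.1 i, p.2 i) (p.1 j, p.2 j) h))) ?_
  rintro ⟨i, hi⟩
  simp only [valKey] at hi
  split_ifs at hi <;> omega

lemma circWord_last (p : Equiv.Perm (Fin n) × (Fin n → Bool)) :
    circWord n p (Fin.last n) = 2 * n + 1 :=
  Fin.snoc_last _ _

lemma range_circWord (p : Equiv.Perm (Fin n) × (Fin n → Bool)) :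
    Set.range (circWord n p) =
      insert (2 * n + 1 : ℤ) (Set.range fun v => valKey n v (signByValue p v)) := by
  rw [circWord, Fin.range_snoc,
    ← p.1.surjective.range_comp fun v => valKey n v (signByValue p v)]
  simp [comp_def, signByValue]

lemma circWord_inj {p p' : Equiv.Perm (Fin n) × (Fin n → Bool)} :
    circWord n p = circWord n p' ↔ p = p' := by
  refine ⟨fun h => ?_, congrArg _⟩
  have hentry i := @valKey_injective n (p.1 i, p.2 i) (p'.1 i, p'.2 i)
    (congrFun (Fin.snoc_inj.mp h).1 i)
  exact Prod.ext (Equiv.ext fun i => congrArg Prod.fst (hentry i))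
    (funext fun i => congrArg Prod.snd (hentry i))

lemma sval_pos_iff (p : Equiv.Perm (Fin n) × (Fin n → Bool)) (i : Fin n) :
    0 < sval n p i ↔ p.2 i = false := by
  unfold sval
  cases p.2 i <;> simp

lemma sval_neg_iff (p : Equiv.Perm (Fin n) × (Fin n → Bool)) (i : Fin n) :
    sval n p i < 0 ↔ p.2 i = true := by
  unfold sval
  cases p.2 i <;> simp <;> omega

lemma valKey_lt_iff (v : Fin n) (b : Bool) : valKey n v b < 2 * n + 1 ↔ b = false := by
  have := v.isLt
  cases b <;> simp [valKey]
  omega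

lemma lt_valKey_iff (v : Fin n) (b : Bool) : 2 * n + 1 < valKey n v b ↔ b = true := by
  have := v.isLt
  cases b <;> simp [valKey] <;> omega

lemma cdescCountC_eq_cyclicDescentCount {m : ℕ}
    (p : Equiv.Perm (Fin (m + 1)) × (Fin (m + 1) → Bool)) :
    cdescCountC (m + 1) p = cyclicDescentCount (circWord (m + 1) p) := by
  rw [cdescCountC, descCountC, cyclicDescentCount, card_filter, card_filter,
    Fin.sum_univ_castSucc (n := m + 1), dif_pos m.succ_pos]
  congr 1
  · refine sum_congr rfl fun i _ => ?_
    refine if_congr ?_ rfl rfl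
    split_ifs with h
    · have hsucc : i.castSucc + 1 = (⟨i + 1, h⟩ : Fin (m + 1)).castSucc := Fin.ext (by simp)
      simp only [hsucc, circWord, Fin.snoc_castSucc, valKey_eq_two_mul_skey, decide_eq_true_eq]
      omega
    · obtain rfl : i = Fin.last m := Fin.ext (by simp; omega)
      rw [Fin.coeSucc_eq_succ, Fin.succ_last, circWord_last, circWord, Fin.snoc_castSucc,
        decide_eq_true_iff, lt_valKey_iff, sval_neg_iff]
  · rw [Fin.last_add_one, circWord_last, show (0 : Fin (m + 1 + 1)) = Fin.castSucc 0 from rfl]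
    simp only [circWord, Fin.snoc_castSucc, valKey_lt_iff, sval_pos_iff]
    rfl

end SignedPerm

section Bijection

variable {m : ℕ}

noncomputable def toPermSigns (p : Equiv.Perm (Fin (m + 1)) × (Fin (m + 1) → Bool)) :
    Equiv.Perm (Fin (m + 1)) × (Fin (m + 1) → Bool) :=
  (standardize (cutAtMax (circWord (m + 1) p)), signByValue p)

lemma toPermSigns_injective : Injective (toPermSigns (m := m)) := by
  intro p p' h
  obtain ⟨hstd, hsign⟩ := Prod.ext_iff.mp h
  have hrange : Set.range (circWord (m + 1) p) = Set.range (circWord (m + 1) p') := by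
    rw [range_circWord, range_circWord]
    simp only [toPermSigns] at hsign
    rw [hsign]
  exact circWord_inj.mp (eq_of_standardize_cutAtMax_eq (circWord_injective p)
    (circWord_injective p') hrange (by rw [circWord_last, circWord_last]) hstd)

lemma cdescCountC_eq_descCount_toPermSigns_add_one
    (p : Equiv.Perm (Fin (m + 1)) × (Fin (m + 1) → Bool)) :
    cdescCountC (m + 1) p = descCount (m + 1) (toPermSigns p).1 + 1 := by
  rw [cdescCountC_eq_cyclicDescentCount,
    cyclicDescentCount_eq_descentCount_cutAtMax_add_one (circWord_injective p),
    ← descentCount_standardize (cutAtMax_injective (circWord_injective p))]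
  rfl

end Bijection

lemma sum_comp_cdescCountC {M : Type*} [AddCommMonoid M] {n : ℕ} (hn : 0 < n) (g : ℕ → M) :
    ∑ p : Equiv.Perm (Fin n) × (Fin n → Bool), g (cdescCountC n p) =
      2 ^ n • ∑ w : Equiv.Perm (Fin n), g (descCount n w + 1) := by
  obtain ⟨m, rfl⟩ := Nat.exists_eq_succ_of_ne_zero hn.ne'
  calc ∑ p, g (cdescCountC (m + 1) p)
      = ∑ p, g (descCount (m + 1) (toPermSigns p).1 + 1) := by
        simp only [cdescCountC_eq_descCount_toPermSigns_add_one]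
    _ = ∑ x : Equiv.Perm (Fin (m + 1)) × (Fin (m + 1) → Bool), g (descCount (m + 1) x.1 + 1) :=
        Fintype.sum_bijective _ (Finite.injective_iff_bijective.mp toPermSigns_injective) _ _
          fun _ => rfl
    _ = 2 ^ (m + 1) • ∑ w, g (descCount (m + 1) w + 1) := by
        simp [Fintype.sum_prod_type_right]

theorem affine_typeC_total_variation_general (n q : ℕ) (hn : 0 < n) (heven : Even q) :
    (1 / 2) * ∑ p : Equiv.Perm (Fin n) × (Fin n → Bool),
        |(1 / (q : ℝ) ^ n) * Nat.choose (q / 2 + n - cdescCountC n p) n -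
          1 / (2 ^ n * n.factorial)| =
      (1 / 2) * ∑ w : Equiv.Perm (Fin n),
        |(1 / ((q / 2 : ℕ) : ℝ) ^ n) * Nat.choose (q / 2 + n - descCount n w - 1) n -
          1 / n.factorial| := by
  obtain ⟨m, rfl⟩ := heven.two_dvd
  have hscale (x : ℝ) : |1 / ((2 * m : ℕ) : ℝ) ^ n * x - 1 / (2 ^ n * n.factorial)| =
      (2 ^ n)⁻¹ * |1 / (m : ℝ) ^ n * x - 1 / n.factorial| := by
    rw [show 1 / ((2 * m : ℕ) : ℝ) ^ n * x - 1 / (2 ^ n * n.factorial) =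
        (2 ^ n)⁻¹ * (1 / (m : ℝ) ^ n * x - 1 / n.factorial) by push_cast; ring,
      abs_mul, abs_of_pos (by positivity)]
  rw [Nat.mul_div_cancel_left m two_pos, sum_comp_cdescCountC hn fun k =>
    |1 / ((2 * m : ℕ) : ℝ) ^ n * ((m + n - k).choose n : ℝ) - 1 / (2 ^ n * n.factorial)|,
    nsmul_eq_mul, mul_sum]
  simp only [Nat.sub_add_eq, hscale, Nat.cast_pow, Nat.cast_ofNat, mul_inv_cancel_left₀
    (pow_ne_zero n (two_ne_zero' ℝ))]

/-- For even `q`, the total variation distance of the affine type-`C_n` `q`-shuffle measure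
`Q(w) = q^{-n} binom(q/2+n-cd(w), n)` on the hyperoctahedral group `C_n` (of order `2^n n!`)
to the uniform measure equals the total variation distance of the Bayer–Diaconis
`q/2`-riffle-shuffle measure `P(w) = (q/2)^{-n} binom(q/2+n-d(w)-1, n)` on `S_n` to the
uniform measure. -/
theorem affine_typeC_total_variation (n q : ℕ) (hn : 0 < n) (hq : 0 < q) (heven : Even q) :
    (1 / 2) * ∑ p : Equiv.Perm (Fin n) × (Fin n → Bool),
        |(1 / (q : ℝ) ^ n) * Nat.choose (q / 2 + n - cdescCountC n p) n -
          1 / (2 ^ n * n.factorial)| =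
      (1 / 2) * ∑ w : Equiv.Perm (Fin n),
        |(1 / ((q / 2 : ℕ) : ℝ) ^ n) * Nat.choose (q / 2 + n - descCount n w - 1) n -
          1 / n.factorial| :=
  affine_typeC_total_variation_general n q hn heven
end
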